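/- arXiv:1911.01301 — 6 statements merged into one kernel-verified Lean document; each statement's English description precedes it below -/
import Mathlib

section
/- For every integer n ≥ 1 there exist constants C(n,r) ∈ (0,∞) for r = 0,…,n, depending only on n and r, with C(n,0) = 1/(n!)² and C(n,n) = 1/n!, such that for every type α, every finite subset S of α and every symmetric kernel h : α^n → ℝ, the square of the U-statistic F of order n with kernel h satisfies F² = Σ_{r=0}^{n} C(n,r) · Σ_{(y_0,…,y_{n−1},z_0,…,z_{n−r−1}) ∈ S^{2n−r}_{≠}} h(y_0,…,y_{n−1}) · h(y_0,…,y_{r−1}, z_0,…,z_{n−r−1}). -/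
open Finset

/-- The finite set of `m`-tuples of pairwise distinct elements of `S`, i.e. injective
functions `Fin m → α` with all values in `S`. -/
noncomputable def distinctTuples {α : Type*} (S : Finset α) (m : ℕ) :
    Finset (Fin m → α) := by
  classical exact (Fintype.piFinset fun _ => S).filter Function.Injective

/-- Extension of an `m`-tuple to a function `ℕ → α`, using the default value `a₀`
beyond position `m − 1`. -/
noncomputable def extNat {α : Type*} (m : ℕ) (a₀ : α) (y : Fin m → α) : ℕ → α :=
  fun x => if h : x < m then y ⟨x, h⟩ else a₀

/-- The `m`-tuples of pairwise distinct elements of `S`, encoded as functions `ℕ → α`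
(equal to `a₀` from position `m` on), so that coordinates can be addressed by natural
numbers. -/
noncomputable def distinctSeqs {α : Type*} (S : Finset α) (m : ℕ) (a₀ : α) :
    Finset (ℕ → α) := by
  classical exact (distinctTuples S m).image (extNat m a₀)

/-- The `U`-statistic of order `n` over the finite set `S` with kernel `h`:
`F = (1/n!) · Σ_{(y_0,…,y_{n−1}) ∈ S^n_{≠}} h(y_0,…,y_{n−1})`. -/
noncomputable def Ustat {α : Type*} (S : Finset α) (n : ℕ)
    (h : (Fin n → α) → ℝ) : ℝ :=
  ((n.factorial : ℝ))⁻¹ * ∑ y ∈ distinctTuples S n, h y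

/-! By symmetry, `h` evaluated at any enumeration of an `n`-set `Y` equals `Ustat Y n h`, so
`F = Σ_{|Y| = n} Ustat Y n h` and `F²` is a sum over pairs `(Y, Z)`, split according to
`r = |Y ∩ Z|`. A tuple in `S^{2n-r}_{≠}` is the concatenation of tuples of lengths `r`, `n - r`,
`n - r` enumerating `Y ∩ Z`, `Y \ Z`, `Z \ Y`; each such triple of sets comes from exactly
`r! ((n - r)!)²` tuples, whence `C(n, r) = 1 / (r! ((n - r)!)²)`. -/

section

variable {α : Type*}

section Tuples

lemma mem_distinctTuples {S : Finset α} {m : ℕ} {y : Fin m → α} :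
    y ∈ distinctTuples S m ↔ (∀ i, y i ∈ S) ∧ Function.Injective y := by
  classical
  simp [distinctTuples, Fintype.mem_piFinset]

lemma card_distinctTuples {Y : Finset α} {m : ℕ} (hY : #Y = m) :
    #(distinctTuples Y m) = m.factorial := by
  let e : distinctTuples Y m ≃ (Fin m ↪ Y) :=
    { toFun y := ⟨fun i => ⟨y.1 i, (mem_distinctTuples.1 y.2).1 i⟩,
        fun _ _ hij => (mem_distinctTuples.1 y.2).2 (congrArg Subtype.val hij)⟩
      invFun f := ⟨fun i => f i, mem_distinctTuples.2
        ⟨fun i => (f i).2, fun _ _ hij => f.injective (Subtype.ext hij)⟩⟩ }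
  rw [← Fintype.card_coe, Fintype.card_congr e, Fintype.card_embedding_eq, Fintype.card_coe,
    Fintype.card_fin, hY, Nat.descFactorial_self]

lemma exists_perm_eq_comp_of_range_eq {m : ℕ} {y y' : Fin m → α}
    (hy : Function.Injective y) (hy' : Function.Injective y')
    (hrange : Set.range y' = Set.range y) : ∃ σ : Equiv.Perm (Fin m), y' = y ∘ σ :=
  ⟨(Equiv.ofInjective y' hy').trans ((Equiv.setCongr hrange).trans (Equiv.ofInjective y hy).symm),
    funext fun i => by simp [Equiv.apply_ofInjective_symm]⟩

variable [DecidableEq α]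

lemma Ustat_image_eq_apply {n : ℕ} {h : (Fin n → α) → ℝ}
    (hsym : ∀ (σ : Equiv.Perm (Fin n)) (y : Fin n → α), h (y ∘ σ) = h y)
    {y : Fin n → α} (hy : Function.Injective y) : Ustat (univ.image y) n h = h y := by
  have hconst : ∀ y' ∈ distinctTuples (univ.image y) n, h y' = h y := by
    intro y' hy'
    obtain ⟨hmem, hinj⟩ := mem_distinctTuples.1 hy'
    have himage : univ.image y' = univ.image y :=
      eq_of_subset_of_card_le (by simpa [subset_iff] using hmem)
        (by rw [card_image_of_injective _ hy, card_image_of_injective _ hinj])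
    obtain ⟨σ, rfl⟩ := exists_perm_eq_comp_of_range_eq hy hinj
      (by simpa using congrArg (fun s : Finset α => (s : Set α)) himage)
    exact hsym σ y
  rw [Ustat, sum_congr rfl hconst, sum_const,
    card_distinctTuples (by simp [card_image_of_injective _ hy]),
    nsmul_eq_mul, ← mul_assoc, inv_mul_cancel₀ (by positivity), one_mul]

lemma image_mem_powersetCard {S : Finset α} {m : ℕ} {y : Fin m → α}
    (hy : y ∈ distinctTuples S m) : univ.image y ∈ S.powersetCard m := by
  obtain ⟨hmem, hinj⟩ := mem_distinctTuples.1 hy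
  exact mem_powersetCard.2
    ⟨by simpa [subset_iff] using hmem, by simp [card_image_of_injective _ hinj]⟩

lemma filter_image_eq_distinctTuples {S Y : Finset α} {m : ℕ} (hYS : Y ⊆ S) (hY : #Y = m) :
    {y ∈ distinctTuples S m | univ.image y = Y} = distinctTuples Y m := by
  ext y
  simp only [mem_filter, mem_distinctTuples]
  constructor
  · rintro ⟨⟨-, hinj⟩, rfl⟩
    exact ⟨fun i => mem_image_of_mem _ (mem_univ i), hinj⟩
  · rintro ⟨hmem, hinj⟩
    refine ⟨⟨fun i => hYS (hmem i), hinj⟩, eq_of_subset_of_card_le ?_ ?_⟩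
    · simpa [subset_iff] using hmem
    · simp [card_image_of_injective _ hinj, hY]

lemma sum_distinctTuples_image {M : Type*} [AddCommMonoid M] (S : Finset α) (m : ℕ)
    (φ : Finset α → M) :
    ∑ y ∈ distinctTuples S m, φ (univ.image y)
      = m.factorial • ∑ Y ∈ S.powersetCard m, φ Y := by
  rw [← sum_fiberwise_of_maps_to (fun y => image_mem_powersetCard), smul_sum]
  refine sum_congr rfl fun Y hY => ?_
  obtain ⟨hYS, hcard⟩ := mem_powersetCard.1 hY
  rw [sum_congr rfl fun y hy => congrArg φ (mem_filter.1 hy).2, sum_const,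
    filter_image_eq_distinctTuples hYS hcard, card_distinctTuples hcard]

lemma Ustat_eq_sum_powersetCard {S : Finset α} {n : ℕ} {h : (Fin n → α) → ℝ}
    (hsym : ∀ (σ : Equiv.Perm (Fin n)) (y : Fin n → α), h (y ∘ σ) = h y) :
    Ustat S n h = ∑ Y ∈ S.powersetCard n, Ustat Y n h := by
  have happly : ∀ y ∈ distinctTuples S n, h y = Ustat (univ.image y) n h := fun y hy =>
    (Ustat_image_eq_apply hsym (mem_distinctTuples.1 hy).2).symm
  rw [Ustat, sum_congr rfl happly, sum_distinctTuples_image S n (Ustat · n h), nsmul_eq_mul,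
    ← mul_assoc, inv_mul_cancel₀ (by positivity), one_mul]

end Tuples

section Sequences

@[simp]
lemma extNat_val {m : ℕ} (a₀ : α) (y : Fin m → α) (i : Fin m) : extNat m a₀ y i = y i :=
  dif_pos i.2

lemma mem_distinctSeqs {S : Finset α} {m : ℕ} {a₀ : α} {v : ℕ → α} :
    v ∈ distinctSeqs S m a₀ ↔
      (∀ i < m, v i ∈ S) ∧ Set.InjOn v (Set.Iio m) ∧ ∀ i, m ≤ i → v i = a₀ := by
  simp only [distinctSeqs, mem_image, mem_distinctTuples]
  constructor
  · rintro ⟨y, ⟨hmem, hinj⟩, rfl⟩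
    refine ⟨fun i hi => by simpa [extNat, hi] using hmem ⟨i, hi⟩, fun i hi j hj hij => ?_,
      fun i hi => by simp [extNat, not_lt.2 hi]⟩
    simp only [Set.mem_Iio] at hi hj
    simpa using congrArg Fin.val (hinj (by simpa [extNat, hi, hj] using hij))
  · rintro ⟨hmem, hinj, htail⟩
    refine ⟨fun i => v i, ⟨fun i => hmem i i.2, fun i j hij => Fin.ext (hinj i.2 j.2 hij)⟩,
      funext fun i => ?_⟩
    by_cases hi : i < m
    · simp [extNat, hi]
    · simp [extNat, hi, htail i (not_lt.1 hi)]

lemma extNat_injective (m : ℕ) (a₀ : α) : Function.Injective (extNat m a₀) := fun y y' hyy =>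
  funext fun i => by simpa using congrFun hyy i

lemma distinctSeqs_mono {S T : Finset α} (hST : S ⊆ T) {m : ℕ} {a₀ : α} {v : ℕ → α}
    (hv : v ∈ distinctSeqs S m a₀) : v ∈ distinctSeqs T m a₀ := by
  obtain ⟨hmem, hinj, htail⟩ := mem_distinctSeqs.1 hv
  exact mem_distinctSeqs.2 ⟨fun i hi => hST (hmem i hi), hinj, htail⟩

def seqAppend (p : ℕ) (a b : ℕ → α) : ℕ → α := fun i => if i < p then a i else b (i - p)

lemma seqAppend_of_lt {p i : ℕ} (a b : ℕ → α) (hi : i < p) : seqAppend p a b i = a i :=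
  if_pos hi

@[simp]
lemma seqAppend_add (p j : ℕ) (a b : ℕ → α) : seqAppend p a b (p + j) = b j := by
  simp [seqAppend]

variable [DecidableEq α]

lemma image_univ_val_eq_image_range (m : ℕ) (v : ℕ → α) :
    univ.image (fun i : Fin m => v i) = (range m).image v := by
  ext x
  simp [Fin.exists_iff]

lemma sum_distinctSeqs_image {M : Type*} [AddCommMonoid M] (S : Finset α) (m : ℕ) (a₀ : α)
    (φ : Finset α → M) :
    ∑ v ∈ distinctSeqs S m a₀, φ ((range m).image v)
      = m.factorial • ∑ Y ∈ S.powersetCard m, φ Y := by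
  classical
  rw [distinctSeqs, sum_image fun _ _ _ _ h => extNat_injective m a₀ h,
    ← sum_distinctTuples_image]
  refine sum_congr rfl fun y _ => ?_
  rw [← image_univ_val_eq_image_range]
  simp

lemma apply_eq_Ustat_image_range {S : Finset α} {n : ℕ} {a₀ : α} {h : (Fin n → α) → ℝ}
    (hsym : ∀ (σ : Equiv.Perm (Fin n)) (y : Fin n → α), h (y ∘ σ) = h y)
    {v : ℕ → α} (hv : v ∈ distinctSeqs S n a₀) :
    h (fun i : Fin n => v i) = Ustat ((range n).image v) n h := by
  have hinj := (mem_distinctSeqs.1 hv).2.1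
  rw [← image_univ_val_eq_image_range,
    Ustat_image_eq_apply hsym fun i j hij => Fin.ext (hinj i.2 j.2 hij)]

lemma image_range_seqAppend (p q : ℕ) (a b : ℕ → α) :
    (range (p + q)).image (seqAppend p a b) = (range p).image a ∪ (range q).image b := by
  ext x
  simp only [mem_image, mem_range, mem_union, seqAppend]
  constructor
  · rintro ⟨i, hi, rfl⟩
    by_cases hip : i < p
    · exact Or.inl ⟨i, hip, (if_pos hip).symm⟩
    · exact Or.inr ⟨i - p, by omega, (if_neg hip).symm⟩
  · rintro (⟨i, hi, rfl⟩ | ⟨j, hj, rfl⟩)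
    · exact ⟨i, by omega, if_pos hi⟩
    · exact ⟨p + j, by omega, by simp⟩

lemma seqAppend_mem_distinctSeqs {S : Finset α} {p q : ℕ} {a₀ : α} {a b : ℕ → α}
    (ha : a ∈ distinctSeqs S p a₀) (hb : b ∈ distinctSeqs (S \ (range p).image a) q a₀) :
    seqAppend p a b ∈ distinctSeqs S (p + q) a₀ := by
  obtain ⟨haS, hainj, -⟩ := mem_distinctSeqs.1 ha
  obtain ⟨hbS, hbinj, hbtail⟩ := mem_distinctSeqs.1 hb
  have hba : ∀ i < p, ∀ j < q, b j ≠ a i := fun i hi j hj hji =>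
    (mem_sdiff.1 (hbS j hj)).2 (mem_image.2 ⟨i, mem_range.2 hi, hji.symm⟩)
  refine mem_distinctSeqs.2 ⟨fun i hi => ?_, fun i hi j hj hij => ?_, fun i hi => ?_⟩
  · unfold seqAppend
    split_ifs with hip
    exacts [haS i hip, (mem_sdiff.1 (hbS _ (by omega))).1]
  · simp only [Set.mem_Iio] at hi hj
    unfold seqAppend at hij
    split_ifs at hij with hip hjp hjp
    · exact hainj hip hjp hij
    · exact (hba i hip _ (by omega) hij.symm).elim
    · exact (hba j hjp _ (by omega) hij).elim
    · have := hbinj (by simp only [Set.mem_Iio]; omega) (by simp only [Set.mem_Iio]; omega) hij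
      omega
  · rw [seqAppend, if_neg (by omega), hbtail _ (by omega)]

lemma mem_distinctSeqs_split {S : Finset α} {p q : ℕ} {a₀ : α} {v : ℕ → α}
    (hv : v ∈ distinctSeqs S (p + q) a₀) :
    let a := seqAppend p v fun _ => a₀
    a ∈ distinctSeqs S p a₀ ∧
      (fun j => v (p + j)) ∈ distinctSeqs (S \ (range p).image a) q a₀ := by
  obtain ⟨hvS, hvinj, hvtail⟩ := mem_distinctSeqs.1 hv
  have hvinj' : ∀ i < p + q, ∀ j < p + q, v i = v j → i = j := fun i hi j hj => hvinj hi hj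
  refine ⟨mem_distinctSeqs.2 ⟨fun i hi => ?_, fun i hi j hj hij => ?_, fun i hi => ?_⟩,
    mem_distinctSeqs.2 ⟨fun j hj => ?_, fun i hi j hj hij => ?_, fun j hj => ?_⟩⟩
  · rw [seqAppend_of_lt _ _ hi]
    exact hvS i (by omega)
  · simp only [Set.mem_Iio] at hi hj
    rw [seqAppend_of_lt _ _ hi, seqAppend_of_lt _ _ hj] at hij
    exact hvinj' i (by omega) j (by omega) hij
  · simp [seqAppend, not_lt.2 hi]
  · refine mem_sdiff.2 ⟨hvS _ (by omega), fun himage => ?_⟩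
    obtain ⟨i, hi, hij⟩ := mem_image.1 himage
    rw [mem_range] at hi
    rw [seqAppend_of_lt _ _ hi] at hij
    have := hvinj' i (by omega) (p + j) (by omega) hij
    omega
  · simp only [Set.mem_Iio] at hi hj
    have := hvinj' (p + i) (by omega) (p + j) (by omega) hij
    omega
  · exact hvtail _ (by omega)

lemma sum_distinctSeqs_add {M : Type*} [AddCommMonoid M] (S : Finset α) (p q : ℕ) (a₀ : α)
    (f : (ℕ → α) → M) :
    ∑ v ∈ distinctSeqs S (p + q) a₀, f v
      = ∑ a ∈ distinctSeqs S p a₀, ∑ b ∈ distinctSeqs (S \ (range p).image a) q a₀,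
          f (seqAppend p a b) := by
  rw [sum_sigma']
  symm
  refine sum_bij' (fun x _ => seqAppend p x.1 x.2)
    (fun v _ => ⟨seqAppend p v fun _ => a₀, fun j => v (p + j)⟩) ?_ ?_ ?_ ?_ fun _ _ => rfl
  · rintro ⟨a, b⟩ hab
    obtain ⟨ha, hb⟩ := mem_sigma.1 hab
    exact seqAppend_mem_distinctSeqs ha hb
  · exact fun v hv => mem_sigma.2 (mem_distinctSeqs_split hv)
  · rintro ⟨a, b⟩ hab
    obtain ⟨ha, hb⟩ := mem_sigma.1 hab
    have hatail := (mem_distinctSeqs.1 ha).2.2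
    refine Sigma.ext (funext fun i => ?_) (heq_of_eq (funext fun j => seqAppend_add p j a b))
    dsimp only
    unfold seqAppend
    split_ifs with hip
    · rfl
    · exact (hatail i (not_lt.1 hip)).symm
  · intro v _
    funext i
    dsimp only
    unfold seqAppend
    split_ifs with hip
    · rfl
    · exact congrArg v (Nat.add_sub_cancel' (not_lt.1 hip))

lemma sum_distinctSeqs_triple {M : Type*} [AddCommMonoid M] (S : Finset α) (r k : ℕ) (a₀ : α)
    (f : Finset α → Finset α → Finset α → M) :
    ∑ a ∈ distinctSeqs S r a₀, ∑ b ∈ distinctSeqs (S \ (range r).image a) k a₀,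
        ∑ c ∈ distinctSeqs (S \ ((range r).image a ∪ (range k).image b)) k a₀,
          f ((range r).image a) ((range k).image b) ((range k).image c)
      = (r.factorial * k.factorial * k.factorial) •
          ∑ A ∈ S.powersetCard r, ∑ B ∈ (S \ A).powersetCard k,
            ∑ C ∈ (S \ (A ∪ B)).powersetCard k, f A B C := by
  have hc (A B : Finset α) := sum_distinctSeqs_image (S \ (A ∪ B)) k a₀ (f A B)
  have hb (A : Finset α) := sum_distinctSeqs_image (S \ A) k a₀
    fun B => ∑ C ∈ (S \ (A ∪ B)).powersetCard k, f A B C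
  simp only [hc, ← smul_sum, hb]
  rw [sum_distinctSeqs_image S r a₀ fun A => ∑ B ∈ (S \ A).powersetCard k,
    ∑ C ∈ (S \ (A ∪ B)).powersetCard k, f A B C, smul_smul, smul_smul,
    mul_comm (k.factorial * k.factorial), ← mul_assoc]

end Sequences

section Subsets

variable [DecidableEq α]

lemma sum_powersetCard_triples {M : Type*} [AddCommMonoid M] (S : Finset α) (r k : ℕ)
    (f : Finset α → Finset α → M) :
    ∑ A ∈ S.powersetCard r, ∑ B ∈ (S \ A).powersetCard k,
        ∑ C ∈ (S \ (A ∪ B)).powersetCard k, f (A ∪ B) (A ∪ C)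
      = ∑ p ∈ S.powersetCard (r + k) ×ˢ S.powersetCard (r + k) with #(p.1 ∩ p.2) = r,
          f p.1 p.2 := by
  simp only [sum_sigma']
  refine sum_bij' (fun x _ => (x.1 ∪ x.2.1, x.1 ∪ x.2.2))
    (fun p _ => ⟨p.1 ∩ p.2, p.1 \ p.2, p.2 \ p.1⟩) ?_ ?_ ?_ ?_ fun _ _ => rfl
  · rintro ⟨A, B, C⟩ hx
    simp only [mem_sigma, mem_powersetCard, subset_sdiff, disjoint_union_right] at hx
    obtain ⟨⟨hAS, rfl⟩, ⟨⟨hBS, hBA⟩, rfl⟩, ⟨hCS, hCA, hCB⟩, hC⟩ := hx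
    have hinter : (A ∪ B) ∩ (A ∪ C) = A := by
      rw [← union_inter_distrib_left, disjoint_iff_inter_eq_empty.1 hCB.symm, union_empty]
    simp only [mem_filter, mem_product, mem_powersetCard]
    exact ⟨⟨⟨union_subset hAS hBS, card_union_of_disjoint hBA.symm⟩,
      ⟨union_subset hAS hCS, by rw [card_union_of_disjoint hCA.symm, hC]⟩⟩, by rw [hinter]⟩
  · rintro ⟨Y, Z⟩ hp
    simp only [mem_filter, mem_product, mem_powersetCard] at hp
    obtain ⟨⟨⟨hYS, hY⟩, ⟨hZS, hZ⟩⟩, hYZ⟩ := hp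
    simp only [mem_sigma, mem_powersetCard, subset_sdiff]
    refine ⟨⟨inter_subset_left.trans hYS, hYZ⟩,
      ⟨⟨sdiff_subset.trans hYS, disjoint_sdiff_inter Y Z⟩, ?_⟩,
      ⟨sdiff_subset.trans hZS, ?_⟩, ?_⟩
    · rw [card_sdiff, inter_comm, hYZ, hY, Nat.add_sub_cancel_left]
    · rw [union_comm, sdiff_union_inter]
      exact sdiff_disjoint
    · rw [card_sdiff, hYZ, hZ, Nat.add_sub_cancel_left]
  · rintro ⟨A, B, C⟩ hx
    simp only [mem_sigma, mem_powersetCard, subset_sdiff, disjoint_left] at hx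
    obtain ⟨-, ⟨⟨-, hBA⟩, -⟩, ⟨-, hCAB⟩, -⟩ := hx
    simp only [Sigma.mk.injEq, heq_eq_eq]
    refine ⟨?_, ?_, ?_⟩ <;> ext x <;> have := @hBA x <;> have := @hCAB x <;>
      simp only [mem_inter, mem_union, mem_sdiff] at * <;> tauto
  · rintro ⟨Y, Z⟩ -
    simp only [Prod.mk.injEq]
    constructor <;> ext x <;> simp only [mem_inter, mem_union, mem_sdiff] <;> tauto

end Subsets

section Overlap

variable [DecidableEq α] {n : ℕ} {h : (Fin n → α) → ℝ}

lemma apply_mul_apply_seqAppend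
    (hsym : ∀ (σ : Equiv.Perm (Fin n)) (y : Fin n → α), h (y ∘ σ) = h y)
    {S : Finset α} {a₀ : α} {r k : ℕ} (hrk : r + k = n) {a b c : ℕ → α}
    (ha : a ∈ distinctSeqs S r a₀) (hb : b ∈ distinctSeqs (S \ (range r).image a) k a₀)
    (hc : c ∈ distinctSeqs (S \ ((range r).image a ∪ (range k).image b)) k a₀) :
    let v := seqAppend n (seqAppend r a b) c
    h (fun i : Fin n => v i) * h (fun i => if (i : ℕ) < r then v i else v (n + (i - r)))
      = Ustat ((range r).image a ∪ (range k).image b) n h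
        * Ustat ((range r).image a ∪ (range k).image c) n h := by
  subst hrk
  have hab := seqAppend_mem_distinctSeqs ha hb
  have hac := seqAppend_mem_distinctSeqs ha
    (distinctSeqs_mono (sdiff_subset_sdiff le_rfl subset_union_left) hc)
  have hfirst : (fun i : Fin (r + k) => seqAppend (r + k) (seqAppend r a b) c i)
      = fun i : Fin (r + k) => seqAppend r a b i := funext fun i => seqAppend_of_lt _ _ i.2
  have hsecond : (fun i : Fin (r + k) =>
        if (i : ℕ) < r then seqAppend (r + k) (seqAppend r a b) c i
        else seqAppend (r + k) (seqAppend r a b) c (r + k + (i - r)))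
      = fun i : Fin (r + k) => seqAppend r a c i := by
    funext i
    split_ifs with hir
    · rw [seqAppend_of_lt _ _ (by omega), seqAppend_of_lt _ _ hir, seqAppend_of_lt _ _ hir]
    · rw [seqAppend_add, seqAppend, if_neg hir]
  dsimp only
  rw [hfirst, hsecond, apply_eq_Ustat_image_range hsym hab, apply_eq_Ustat_image_range hsym hac,
    image_range_seqAppend, image_range_seqAppend]

lemma sum_distinctSeqs_overlap
    (hsym : ∀ (σ : Equiv.Perm (Fin n)) (y : Fin n → α), h (y ∘ σ) = h y)
    (S : Finset α) (a₀ : α) {r k : ℕ} (hrk : r + k = n) :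
    ∑ v ∈ distinctSeqs S (2 * n - r) a₀,
        h (fun i : Fin n => v i) * h (fun i => if (i : ℕ) < r then v i else v (n + (i - r)))
      = (r.factorial * k.factorial * k.factorial) •
          ∑ p ∈ S.powersetCard n ×ˢ S.powersetCard n with #(p.1 ∩ p.2) = r,
            Ustat p.1 n h * Ustat p.2 n h := by
  subst hrk
  rw [show 2 * (r + k) - r = r + k + k by omega, sum_distinctSeqs_add, sum_distinctSeqs_add,
    ← sum_powersetCard_triples S r k fun Y Z => Ustat Y (r + k) h * Ustat Z (r + k) h,
    ← sum_distinctSeqs_triple S r k a₀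
      fun A B C => Ustat (A ∪ B) (r + k) h * Ustat (A ∪ C) (r + k) h]
  refine sum_congr rfl fun a ha => sum_congr rfl fun b hb => ?_
  rw [image_range_seqAppend]
  exact sum_congr rfl fun c hc => apply_mul_apply_seqAppend hsym rfl ha hb hc

lemma Ustat_sq_eq_sum_overlap
    (hsym : ∀ (σ : Equiv.Perm (Fin n)) (y : Fin n → α), h (y ∘ σ) = h y) (S : Finset α) :
    Ustat S n h ^ 2 = ∑ r ∈ range (n + 1),
      ∑ p ∈ S.powersetCard n ×ˢ S.powersetCard n with #(p.1 ∩ p.2) = r,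
        Ustat p.1 n h * Ustat p.2 n h := by
  have hoverlap :
      ∀ p ∈ S.powersetCard n ×ˢ S.powersetCard n, #(p.1 ∩ p.2) ∈ range (n + 1) :=
    fun p hp => mem_range_succ_iff.2 <|
      (card_le_card inter_subset_left).trans (mem_powersetCard.1 (mem_product.1 hp).1).2.le
  rw [Ustat_eq_sum_powersetCard (S := S) hsym, sq, sum_mul_sum, ← sum_product',
    sum_fiberwise_of_maps_to hoverlap]

end Overlap

end

theorem stmt0_general (n : ℕ) :
    ∃ C : ℕ → ℝ,
      (∀ r, r ≤ n → 0 < C r) ∧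
      C 0 = ((n.factorial : ℝ) ^ 2)⁻¹ ∧
      C n = (n.factorial : ℝ)⁻¹ ∧
      ∀ (α : Type*) (S : Finset α) (a₀ : α) (h : (Fin n → α) → ℝ),
        (∀ (σ : Equiv.Perm (Fin n)) (y : Fin n → α), h (y ∘ σ) = h y) →
        (Ustat S n h) ^ 2 =
          ∑ r ∈ Finset.range (n + 1), C r *
            ∑ v ∈ distinctSeqs S (2 * n - r) a₀,
              h (fun i => v (i : ℕ)) *
              h (fun i => if (i : ℕ) < r then v (i : ℕ)
                          else v (n + ((i : ℕ) - r))) := by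
  refine ⟨fun r => ((r.factorial * (n - r).factorial * (n - r).factorial : ℕ) : ℝ)⁻¹,
    fun r _ => by positivity, by simp [sq], by simp, fun α S a₀ h hsym => ?_⟩
  classical
  rw [Ustat_sq_eq_sum_overlap hsym S]
  refine sum_congr rfl fun r hr => ?_
  rw [sum_distinctSeqs_overlap hsym S a₀ (Nat.add_sub_of_le (mem_range_succ_iff.1 hr)),
    nsmul_eq_mul, inv_mul_cancel_left₀ (by positivity)]

/-- For every `n ≥ 1` there exist constants `C(n,r) ∈ (0,∞)`,
`r = 0,…,n`, with `C(n,0) = 1/(n!)²` and `C(n,n) = 1/n!`, such that for every type `α`,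
every finite `S ⊆ α` and every symmetric kernel `h : α^n → ℝ`, the square of the
`U`-statistic `F` of order `n` with kernel `h` satisfies
`F² = Σ_{r=0}^{n} C(n,r) · Σ_{(y,z) ∈ S^{2n−r}_{≠}} h(y_0,…,y_{n−1}) ·
h(y_0,…,y_{r−1}, z_0,…,z_{n−r−1})`.
In a tuple `v ∈ S^{2n−r}_{≠}` the coordinates `y_i = v i` (for `i < n`) and
`z_j = v (n + j)` (for `j < n − r`). -/
theorem stmt0 (n : ℕ) (hn : 1 ≤ n) :
    ∃ C : ℕ → ℝ,
      (∀ r, r ≤ n → 0 < C r) ∧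
      C 0 = ((n.factorial : ℝ) ^ 2)⁻¹ ∧
      C n = (n.factorial : ℝ)⁻¹ ∧
      ∀ (α : Type*) (S : Finset α) (a₀ : α) (h : (Fin n → α) → ℝ),
        (∀ (σ : Equiv.Perm (Fin n)) (y : Fin n → α), h (y ∘ σ) = h y) →
        (Ustat S n h) ^ 2 =
          ∑ r ∈ Finset.range (n + 1), C r *
            ∑ v ∈ distinctSeqs S (2 * n - r) a₀,
              h (fun i => v (i : ℕ)) *
              h (fun i => if (i : ℕ) < r then v (i : ℕ)
                          else v (n + ((i : ℕ) - r))) :=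
  stmt0_general n
end

section
/- For all integers d ≥ 1 and k ≥ 1, ∫_{(B)^k} h_1(y_1,…,y_k) dy_1 ⋯ dy_k = (k + 1)^d, where B := [−1,1]^d ⊂ ℝ^d. -/
/-!
The condition `‖y j - y i‖ ≤ 1` splits over the `d` coordinates, so after transposing the
variables the integral is the `d`-th power of the one-dimensional volume
`vol {x ∈ [-1,1]^k | x j - x i ≤ 1 for all i, j}`, and it suffices to show that this is `k + 1`.
Up to a null set we may use `[-1,1)^k`. Sort its points by the set `A` of negative coordinates
and add `1` to those: this maps the piece of `A` bijectively onto the set of `y ∈ [0,1)^k` with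
`y j ≤ y i` for `i ∈ A`, `j ∉ A`, i.e. for which `A` is an upper cut of `y`. A point `y` with
distinct coordinates has exactly `k + 1` upper cuts, so the pieces cover `[0,1)^k` exactly
`k + 1` times almost everywhere.
-/

open MeasureTheory

open Classical in
/-- The indicator of a proposition, as a real number. -/
noncomputable def ind (p : Prop) : ℝ := if p then 1 else 0

open Set
open scoped ENNReal Finset

section UpperCut

variable {ι α : Type*} [LinearOrder α]

def IsUpperCut (f : ι → α) (A : Finset ι) : Prop := ∀ i ∈ A, ∀ j ∉ A, f j ≤ f i

open Classical in
/-- For injective `f` the upper cuts are `∅` and the sets `{j | f i ≤ f j}`. -/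
theorem card_filter_isUpperCut [Fintype ι] {f : ι → α} (hf : Function.Injective f) :
    #{A : Finset ι | IsUpperCut f A} = Fintype.card ι + 1 := by
  rw [← Fintype.card_option, ← Finset.card_univ]
  symm
  refine Finset.card_bij (fun o _ => o.elim ∅ fun i => ({j | f i ≤ f j} : Finset ι)) ?_ ?_ ?_
  · rintro (_ | i) - <;> rw [Finset.mem_filter_univ]
    · simp [IsUpperCut]
    · intro a ha b hb
      simp only [Option.elim, Finset.mem_filter_univ, not_le] at ha hb
      exact (hb.trans_le ha).le
  · rintro (_ | i) - (_ | j) - h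
    · rfl
    · simpa using congrArg (j ∈ ·) h
    · simpa using congrArg (i ∈ ·) h
    · have hi := congrArg (i ∈ ·) h
      have hj := congrArg (j ∈ ·) h
      simp at hi hj
      rw [hf (le_antisymm hj hi)]
  · intro A hA
    rw [Finset.mem_filter_univ] at hA
    obtain rfl | hne := A.eq_empty_or_nonempty
    · exact ⟨none, Finset.mem_univ _, rfl⟩
    obtain ⟨i, hiA, hmin⟩ := A.exists_min_image f hne
    refine ⟨some i, Finset.mem_univ _, Finset.ext fun j => ?_⟩
    rw [Option.elim, Finset.mem_filter_univ]
    refine ⟨fun hij => ?_, hmin j⟩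
    by_contra hjA
    exact hjA (hf (le_antisymm (hA i hiA j hjA) hij) ▸ hiA)

end UpperCut

section UnitSpread

variable {ι : Type*}

theorem volume_setOf_apply_eq_apply [Fintype ι] {i j : ι} (hij : i ≠ j) :
    volume {y : ι → ℝ | y i = y j} = 0 := by
  classical
  let L : (ι → ℝ) →ₗ[ℝ] ℝ := LinearMap.proj (R := ℝ) (φ := fun _ : ι => ℝ) i - LinearMap.proj j
  have hL : {y : ι → ℝ | y i = y j} = LinearMap.ker L := by
    ext y
    simp [L, sub_eq_zero]
  rw [hL]
  refine Measure.addHaar_submodule _ _ fun htop => ?_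
  have : L (Pi.single i 1) = 0 := LinearMap.ker_eq_top.1 htop ▸ rfl
  simp [L, Pi.single_eq_of_ne hij.symm] at this

theorem ae_injective_pi_real [Fintype ι] : ∀ᵐ y : ι → ℝ, Function.Injective y := by
  refine ae_all_iff.2 fun i => ae_all_iff.2 fun j => ?_
  by_cases hij : i = j
  · exact .of_forall fun _ _ => hij
  · exact measure_mono_null (fun y hy => (Classical.not_imp.1 hy).1)
      (volume_setOf_apply_eq_apply hij)

theorem measurableSet_setOf_isUpperCut [Fintype ι] (A : Finset ι) :
    MeasurableSet {y : ι → ℝ | IsUpperCut y A} := by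
  simp only [IsUpperCut]
  measurability

theorem sum_volume_pi_Ico_inter_setOf_isUpperCut [Fintype ι] :
    ∑ A : Finset ι, volume (univ.pi (fun _ => Ico (0 : ℝ) 1) ∩ {y | IsUpperCut y A})
      = Fintype.card ι + 1 := by
  classical
  set box := univ.pi fun _ : ι => Ico (0 : ℝ) 1
  calc ∑ A : Finset ι, volume (box ∩ {y | IsUpperCut y A})
      = ∑ A : Finset ι, ∫⁻ y in box, {y | IsUpperCut y A}.indicator 1 y := by
        simp_rw [lintegral_indicator_one (measurableSet_setOf_isUpperCut _),
          Measure.restrict_apply (measurableSet_setOf_isUpperCut _), inter_comm]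
    _ = ∫⁻ y in box, ∑ A : Finset ι, {y | IsUpperCut y A}.indicator 1 y :=
        (lintegral_finsetSum _ fun A _ =>
          measurable_one.indicator (measurableSet_setOf_isUpperCut A)).symm
    _ = ∫⁻ _ in box, (Fintype.card ι + 1 : ℝ≥0∞) := by
        refine lintegral_congr_ae (ae_restrict_of_ae (ae_injective_pi_real.mono fun y hy => ?_))
        simp only [indicator_apply, mem_ofPred_eq, Pi.one_apply]
        rw [Finset.sum_boole, card_filter_isUpperCut hy]
        push_cast; rfl
    _ = Fintype.card ι + 1 := by
        simp [box, Measure.restrict_apply, Real.volume_Ico, volume_pi_pi]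

theorem preimage_add_indicator_pi_Ico_inter_setOf_isUpperCut (A : Finset ι) :
    (· + (A : Set ι).indicator 1) ⁻¹' (univ.pi (fun _ => Ico (0 : ℝ) 1) ∩ {y | IsUpperCut y A})
      = univ.pi (fun _ => Ico (-1 : ℝ) 1) ∩ {x | ∀ i j, x j - x i ≤ 1}
          ∩ {x | ∀ i, x i < 0 ↔ i ∈ A} := by
  ext x
  have hcoord : ∀ i, x i + (A : Set ι).indicator 1 i ∈ Ico 0 1 ↔
      x i ∈ Ico (-1) 1 ∧ (x i < 0 ↔ i ∈ A) := by
    intro i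
    by_cases hi : i ∈ A
    · simp only [indicator_of_mem (Finset.mem_coe.2 hi), Pi.one_apply, mem_Ico, hi, iff_true]
      grind
    · simp only [indicator_of_notMem (mt Finset.mem_coe.1 hi), add_zero, mem_Ico, hi, iff_false,
        not_lt]
      grind
  simp only [mem_preimage, mem_inter_iff, mem_univ_pi, Pi.add_apply, hcoord, forall_and,
    mem_ofPred_eq]
  constructor
  · rintro ⟨⟨hbox, hsign⟩, hcut⟩
    refine ⟨⟨hbox, fun i j => ?_⟩, hsign⟩
    by_cases hj : j ∈ A
    · linarith [(hsign j).2 hj, (hbox i).1]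
    by_cases hi : i ∈ A
    · have h := hcut i hi j hj
      simp only [Pi.add_apply, indicator_of_mem (Finset.mem_coe.2 hi),
        indicator_of_notMem (mt Finset.mem_coe.1 hj), Pi.one_apply, add_zero] at h
      linarith
    · linarith [(hbox j).2, not_lt.1 (mt (hsign i).1 hi)]
  · rintro ⟨⟨hbox, hspread⟩, hsign⟩
    refine ⟨⟨hbox, hsign⟩, fun i hi j hj => ?_⟩
    simp only [Pi.add_apply, indicator_of_mem (Finset.mem_coe.2 hi),
      indicator_of_notMem (mt Finset.mem_coe.1 hj), Pi.one_apply, add_zero]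
    linarith [hspread i j]

theorem volume_pi_Ico_inter_setOf_sub_le_one [Fintype ι] :
    volume (univ.pi (fun _ : ι => Ico (-1 : ℝ) 1) ∩ {x | ∀ i j, x j - x i ≤ 1})
      = Fintype.card ι + 1 := by
  classical
  set W := univ.pi (fun _ : ι => Ico (-1 : ℝ) 1) ∩ {x | ∀ i j, x j - x i ≤ 1}
  let negPart : (ι → ℝ) → Finset ι := fun x => {i | x i < 0}
  have hfiber (A : Finset ι) : negPart ⁻¹' {A} = {x | ∀ i, x i < 0 ↔ i ∈ A} := by
    ext x
    simp [negPart, Finset.ext_iff, iff_comm]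
  have hmeas (A : Finset ι) : MeasurableSet (negPart ⁻¹' {A}) := by
    rw [hfiber]
    measurability
  calc volume W = ∑ A : Finset ι, volume.restrict W (negPart ⁻¹' {A}) := by
        rw [sum_measure_preimage_singleton _ fun A _ => hmeas A, Finset.coe_univ, preimage_univ,
          Measure.restrict_apply_univ]
    _ = ∑ A : Finset ι, volume (univ.pi (fun _ => Ico (0 : ℝ) 1) ∩ {y | IsUpperCut y A}) := by
        refine Finset.sum_congr rfl fun A _ => ?_
        rw [Measure.restrict_apply (hmeas A), hfiber, inter_comm,
          ← preimage_add_indicator_pi_Ico_inter_setOf_isUpperCut, measure_preimage_add_right]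
    _ = Fintype.card ι + 1 := sum_volume_pi_Ico_inter_setOf_isUpperCut

theorem volume_pi_Icc_inter_setOf_sub_le_one [Fintype ι] :
    volume (univ.pi (fun _ : ι => Icc (-1 : ℝ) 1) ∩ {x | ∀ i j, x j - x i ≤ 1})
      = Fintype.card ι + 1 := by
  rw [← volume_pi_Ico_inter_setOf_sub_le_one]
  refine measure_congr (Filter.EventuallyEq.inter ?_ .rfl)
  rw [pi_univ_Icc]
  exact Measure.univ_pi_Ico_ae_eq_Icc.symm

end UnitSpread

theorem measurePreserving_transpose {ι κ X : Type*} [Fintype ι] [Fintype κ] [MeasurableSpace X]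
    (μ : Measure X) [SigmaFinite μ] :
    MeasurePreserving (fun (y : ι → κ → X) c i => y i c)
      (.pi fun _ : ι => .pi fun _ : κ => μ) (.pi fun _ : κ => .pi fun _ : ι => μ) where
  measurable := by fun_prop
  map_eq := by
    refine (Measure.pi_eq_generateFrom (fun _ => generateFrom_pi) (fun _ => isPiSystem_pi)
      (fun _ => Measure.FiniteSpanningSetsIn.pi fun _ => μ.toFiniteSpanningSetsIn)
      fun s hs => ?_).symm
    choose t ht hts using hs
    have hpre : (fun (y : ι → κ → X) c i => y i c) ⁻¹' univ.pi s
        = univ.pi fun i => univ.pi fun c => t c i := by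
      ext y
      simp only [← hts, mem_preimage, mem_univ_pi]
      exact forall_comm
    rw [Measure.map_apply (by fun_prop) (MeasurableSet.univ_pi fun c => hts c ▸
      MeasurableSet.univ_pi fun i => ht c i (mem_univ i)), hpre, Measure.pi_pi]
    simp_rw [← hts, Measure.pi_pi]
    exact Finset.prod_comm

theorem pi_Icc_inter_setOf_norm_sub_le_one_eq_preimage_transpose {ι κ : Type*} [Fintype κ] :
    (univ.pi fun _ : ι => univ.pi fun _ : κ => Icc (-1 : ℝ) 1) ∩ {y | ∀ i j, ‖y j - y i‖ ≤ 1}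
      = (fun y c i => y i c) ⁻¹'
          univ.pi fun _ => univ.pi (fun _ => Icc (-1 : ℝ) 1) ∩ {x | ∀ i j, x j - x i ≤ 1} := by
  ext y
  simp only [mem_inter_iff, mem_univ_pi, mem_preimage, mem_ofPred_eq,
    pi_norm_le_iff_of_nonneg zero_le_one, Pi.sub_apply, Real.norm_eq_abs]
  exact ⟨fun ⟨h1, h2⟩ c => ⟨fun i => h1 i c, fun i j => (abs_le.1 (h2 i j c)).2⟩,
    fun h => ⟨fun i c => (h c).1 i, fun i j c => abs_sub_le_iff.2 ⟨(h c).2 i j, (h c).2 j i⟩⟩⟩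

theorem stmt4_general (d k : ℕ) :
    (∫ y in (Set.univ.pi fun _ : Fin k =>
        (Set.univ.pi fun _ : Fin d => Set.Icc (-1 : ℝ) 1)),
      ind (∀ i j : Fin k, ‖y j - y i‖ ≤ 1))
      = ((k : ℝ) + 1) ^ d := by
  set C := {y : Fin k → Fin d → ℝ | ∀ i j, ‖y j - y i‖ ≤ 1}
  have hC : MeasurableSet C := by measurability
  have hW : MeasurableSet
      (univ.pi (fun _ : Fin k => Icc (-1 : ℝ) 1) ∩ {x | ∀ i j, x j - x i ≤ 1}) := by
    measurability
  have hind : (fun y => ind (∀ i j : Fin k, ‖y j - y i‖ ≤ 1)) = C.indicator 1 := by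
    ext y
    simp [ind, indicator_apply, C]
  have htranspose : MeasurePreserving (fun (y : Fin k → Fin d → ℝ) c i => y i c) :=
    measurePreserving_transpose volume
  rw [hind, integral_indicator_one hC, measureReal_def, Measure.restrict_apply hC, inter_comm,
    pi_Icc_inter_setOf_norm_sub_le_one_eq_preimage_transpose,
    htranspose.measure_preimage (MeasurableSet.univ_pi fun _ => hW).nullMeasurableSet,
    volume_pi_pi, volume_pi_Icc_inter_setOf_sub_le_one]
  simp [ENNReal.toReal_add]

/-- For all integers `d ≥ 1` and `k ≥ 1`,
`∫_{(B)^k} h_1(y_1,…,y_k) dy_1 ⋯ dy_k = (k + 1)^d`, where `B = [−1,1]^d ⊂ ℝ^d`.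
Here `ℝ^d` is modelled as `Fin d → ℝ` with the sup (`ℓ^∞`) norm, and
`h_1(y_1,…,y_k)` is the indicator that all pairwise `ℓ^∞` distances are at most `1`. -/
theorem stmt4 (d k : ℕ) (hd : 1 ≤ d) (hk : 1 ≤ k) :
    (∫ y in (Set.univ.pi fun _ : Fin k =>
        (Set.univ.pi fun _ : Fin d => Set.Icc (-1 : ℝ) 1)),
      ind (∀ i j : Fin k, ‖y j - y i‖ ≤ 1))
      = ((k : ℝ) + 1) ^ d :=
  stmt4_general d k
end

section
/- Let k > r ≥ 1 be integers and let y_1,…,y_r ∈ [−1,1] be real numbers. Set y_max := max{0, y_1,…,y_r} and y_min := min{0, y_1,…,y_r}, and assume y_max − y_min ≤ 1. Then ∫_{[−1+y_max, 1+y_min]^{k−r}} 1{max_i z_i − min_i z_i ≤ 1} dz_1 ⋯ dz_{k−r} = 1 + (k − r)·(1 − (y_max − y_min)). -/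
/-!
Integrating out the first coordinate `t ∈ [a, b]` of a point of `[a, b]ⁿ⁺¹` of diameter at most
`1` leaves a point of `[max a (t - 1), min b (t + 1)]ⁿ` of diameter at most `1`, and when
`1 ≤ b - a ≤ 2` this slice interval again has length in `[1, 2]`. Induction on `n` therefore gives
the volume `1 + n (b - a - 1)`, the inductive step being
`∫ₐᵇ (min b (t + 1) - max a (t - 1)) dt = 2 (b - a) - 1`.
The theorem is the case `a = -1 + ymax`, `b = 1 + ymin`, `n = k - r`.
-/

open MeasureTheory

open Set

theorem setIntegral_ind_mem {α : Type*} [MeasurableSpace α] (μ : Measure α) {s t : Set α}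
    (ht : MeasurableSet t) : ∫ x in s, ind (x ∈ t) ∂μ = μ.real (s ∩ t) := by
  have : (fun x => ind (x ∈ t)) = t.indicator fun _ => 1 := by
    ext x; by_cases hx : x ∈ t <;> simp [ind, hx]
  rw [this, setIntegral_indicator ht, setIntegral_const, smul_eq_mul, mul_one]

theorem volume_eq_lintegral_volume_cons {α : Type*} [MeasureSpace α]
    [SigmaFinite (volume : Measure α)] {n : ℕ} {s : Set (Fin (n + 1) → α)}
    (hs : MeasurableSet s) :
    volume s = ∫⁻ t, volume {z : Fin n → α | Fin.cons t z ∈ s} := by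
  have e := (volume_preserving_piFinSuccAbove (fun _ : Fin (n + 1) => α) 0).symm
  rw [← e.measure_preimage hs.nullMeasurableSet, Measure.volume_eq_prod,
    Measure.prod_apply (e.measurable hs)]
  simp_rw [MeasurableEquiv.piFinSuccAbove_symm_apply, Fin.insertNthEquiv, Equiv.coe_fn_mk,
    Fin.insertNth_zero']
  rfl

def diamLeOne (n : ℕ) : Set (Fin n → ℝ) := {z | ∀ i j, z i - z j ≤ 1}

def cubeDiamLeOne (n : ℕ) (a b : ℝ) : Set (Fin n → ℝ) := (univ.pi fun _ => Icc a b) ∩ diamLeOne n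

theorem measurableSet_diamLeOne (n : ℕ) : MeasurableSet (diamLeOne n) := by
  simp only [diamLeOne, ofPred_forall]
  exact .iInter fun i => .iInter fun j =>
    measurableSet_le ((measurable_pi_apply i).sub (measurable_pi_apply j)) measurable_const

theorem measurableSet_cubeDiamLeOne (n : ℕ) (a b : ℝ) : MeasurableSet (cubeDiamLeOne n a b) :=
  (MeasurableSet.univ_pi fun _ => measurableSet_Icc).inter (measurableSet_diamLeOne n)

theorem cons_mem_cubeDiamLeOne {n : ℕ} {a b t : ℝ} {z : Fin n → ℝ} :
    Fin.cons t z ∈ cubeDiamLeOne (n + 1) a b ↔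
      t ∈ Icc a b ∧ z ∈ cubeDiamLeOne n (max a (t - 1)) (min b (t + 1)) := by
  simp only [cubeDiamLeOne, diamLeOne, mem_inter_iff, mem_pi, mem_univ, forall_const, mem_Icc,
    mem_ofPred_eq, Fin.forall_fin_succ, Fin.cons_zero, Fin.cons_succ, sub_self, max_le_iff,
    le_min_iff]
  constructor
  · rintro ⟨⟨ht, hz⟩, ⟨-, htz⟩, hzt⟩
    exact ⟨ht, fun i => ⟨⟨(hz i).1, by linarith [htz i]⟩, (hz i).2, by linarith [(hzt i).1]⟩,
      fun i => (hzt i).2⟩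
  · rintro ⟨ht, hz, hzz⟩
    exact ⟨⟨ht, fun i => ⟨(hz i).1.1, (hz i).2.1⟩⟩,
      ⟨by norm_num, fun i => by linarith [(hz i).1.2]⟩, fun i => ⟨by linarith [(hz i).2.2], hzz i⟩⟩

theorem volume_cubeDiamLeOne_succ (n : ℕ) (a b : ℝ) :
    volume (cubeDiamLeOne (n + 1) a b) =
      ∫⁻ t in Icc a b, volume (cubeDiamLeOne n (max a (t - 1)) (min b (t + 1))) := by
  rw [volume_eq_lintegral_volume_cons (measurableSet_cubeDiamLeOne _ a b),
    ← lintegral_indicator measurableSet_Icc]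
  congr 1 with t
  by_cases ht : t ∈ Icc a b <;> simp [cons_mem_cubeDiamLeOne, ht]

theorem one_le_min_sub_max {a b t : ℝ} (hab : 1 ≤ b - a) (ht : t ∈ Icc a b) :
    1 ≤ min b (t + 1) - max a (t - 1) := by
  obtain ⟨hat, htb⟩ := ht
  rcases max_cases a (t - 1) with ⟨h, -⟩ | ⟨h, -⟩ <;>
    rcases min_cases b (t + 1) with ⟨h', -⟩ | ⟨h', -⟩ <;> rw [h, h'] <;> linarith

theorem integral_min_sub_max {a b : ℝ} (h₁ : 1 ≤ b - a) (h₂ : b - a ≤ 2) :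
    ∫ t in a..b, (min b (t + 1) - max a (t - 1)) = 2 * (b - a) - 1 := by
  have hI : ∀ x y : ℝ, IntervalIntegrable (fun t => min b (t + 1) - max a (t - 1)) volume x y :=
    fun x y => by apply Continuous.intervalIntegrable; fun_prop
  rw [← intervalIntegral.integral_add_adjacent_intervals (hI a (b - 1)) (hI (b - 1) b),
    ← intervalIntegral.integral_add_adjacent_intervals (hI (b - 1) (a + 1)) (hI (a + 1) b)]
  have left : ∫ t in a..(b - 1), (min b (t + 1) - max a (t - 1)) = ((b - a) ^ 2 - 1) / 2 := by
    rw [intervalIntegral.integral_congr (g := fun t => t + 1 - a) fun t ht => by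
      rw [uIcc_of_le (by linarith)] at ht
      simp only [min_eq_right (show t + 1 ≤ b by linarith [ht.2]),
        max_eq_left (show t - 1 ≤ a by linarith [ht.1, ht.2])]]
    simp [integral_id]
    ring
  have middle : ∫ t in (b - 1)..(a + 1), (min b (t + 1) - max a (t - 1)) =
      (2 - (b - a)) * (b - a) := by
    rw [intervalIntegral.integral_congr (g := fun _ => b - a) fun t ht => by
      rw [uIcc_of_le (by linarith)] at ht
      simp only [min_eq_left (show b ≤ t + 1 by linarith [ht.1]),
        max_eq_left (show t - 1 ≤ a by linarith [ht.2])]]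
    simp
    ring
  have right : ∫ t in (a + 1)..b, (min b (t + 1) - max a (t - 1)) = ((b - a) ^ 2 - 1) / 2 := by
    rw [intervalIntegral.integral_congr (g := fun t => b + 1 - t) fun t ht => by
      rw [uIcc_of_le (by linarith)] at ht
      simp only [min_eq_left (show b ≤ t + 1 by linarith [ht.1]),
        max_eq_right (show a ≤ t - 1 by linarith [ht.1])]
      ring]
    rw [intervalIntegral.integral_comp_sub_left (fun t => t)]
    simp [integral_id]
  rw [left, middle, right]
  ring

theorem volume_cubeDiamLeOne (n : ℕ) {a b : ℝ} (h₁ : 1 ≤ b - a) (h₂ : b - a ≤ 2) :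
    volume (cubeDiamLeOne n a b) = ENNReal.ofReal (1 + n * (b - a - 1)) := by
  induction n generalizing a b with
  | zero => simp [cubeDiamLeOne, diamLeOne, Real.volume_Icc_pi]
  | succ n ih =>
    set f : ℝ → ℝ := fun t => 1 - n + n * (min b (t + 1) - max a (t - 1))
    have hslice : EqOn (fun t => volume (cubeDiamLeOne n (max a (t - 1)) (min b (t + 1))))
        (fun t => ENNReal.ofReal (f t)) (Icc a b) := fun t ht => by
      dsimp only
      rw [ih (one_le_min_sub_max h₁ ht)
        (by linarith [min_le_right b (t + 1), le_max_right a (t - 1)])]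
      congr 1
      ring
    have hf_nonneg : ∀ t ∈ Icc a b, 0 ≤ f t := fun t ht => by
      have := one_le_min_sub_max h₁ ht
      simp only [f]
      nlinarith [(n.cast_nonneg : (0 : ℝ) ≤ n)]
    have hf_cont : Continuous f := by fun_prop
    rw [volume_cubeDiamLeOne_succ, setLIntegral_congr_fun measurableSet_Icc hslice,
      ← ofReal_integral_eq_lintegral_ofReal hf_cont.integrableOn_Icc
        ((ae_restrict_iff' measurableSet_Icc).2 (.of_forall hf_nonneg)),
      integral_Icc_eq_integral_Ioc, ← intervalIntegral.integral_of_le (by linarith)]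
    simp only [f]
    rw [intervalIntegral.integral_add intervalIntegrable_const
      (by apply Continuous.intervalIntegrable; fun_prop), intervalIntegral.integral_const_mul,
      integral_min_sub_max h₁ h₂, intervalIntegral.integral_const, smul_eq_mul]
    push_cast
    ring_nf

theorem stmt5_general (k r : ℕ) (hr : 1 ≤ r) (hrk : r < k) (y : Fin r → ℝ)
    (ymax ymin : ℝ)
    (hmax : ymax = max 0 (Finset.univ.sup' ⟨⟨0, hr⟩, Finset.mem_univ _⟩ y))
    (hmin : ymin = min 0 (Finset.univ.inf' ⟨⟨0, hr⟩, Finset.mem_univ _⟩ y))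
    (hgap : ymax - ymin ≤ 1) :
    (∫ z in (Set.univ.pi fun _ : Fin (k - r) => Set.Icc (-1 + ymax) (1 + ymin)),
      ind (∀ i j : Fin (k - r), z i - z j ≤ 1))
      = 1 + ((k : ℝ) - (r : ℝ)) * (1 - (ymax - ymin)) := by
  have hymax : 0 ≤ ymax := hmax ▸ le_max_left _ _
  have hymin : ymin ≤ 0 := hmin ▸ min_le_left _ _
  have hvol := volume_cubeDiamLeOne (k - r) (a := -1 + ymax) (b := 1 + ymin)
    (by linarith) (by linarith)
  calc _ = volume.real (cubeDiamLeOne (k - r) (-1 + ymax) (1 + ymin)) :=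
        setIntegral_ind_mem volume (measurableSet_diamLeOne _)
    _ = _ := by
      rw [measureReal_def, hvol, ENNReal.toReal_ofReal
        (by nlinarith [((k - r).cast_nonneg : (0 : ℝ) ≤ (k - r : ℕ))]), Nat.cast_sub hrk.le]
      ring

/-- Let `k > r ≥ 1` be integers and `y_1,…,y_r ∈ [−1,1]`.
With `y_max := max{0, y_1,…,y_r}`, `y_min := min{0, y_1,…,y_r}` and assuming
`y_max − y_min ≤ 1`, one has
`∫_{[−1+y_max, 1+y_min]^{k−r}} 1{max_i z_i − min_i z_i ≤ 1} dz = 1 + (k−r)·(1 − (y_max − y_min))`.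
The diameter condition is expressed as `∀ i j, z i − z j ≤ 1`. -/
theorem stmt5 (k r : ℕ) (hr : 1 ≤ r) (hrk : r < k) (y : Fin r → ℝ)
    (hy : ∀ i, y i ∈ Set.Icc (-1 : ℝ) 1)
    (ymax ymin : ℝ)
    (hmax : ymax = max 0 (Finset.univ.sup' ⟨⟨0, hr⟩, Finset.mem_univ _⟩ y))
    (hmin : ymin = min 0 (Finset.univ.inf' ⟨⟨0, hr⟩, Finset.mem_univ _⟩ y))
    (hgap : ymax - ymin ≤ 1) :
    (∫ z in (Set.univ.pi fun _ : Fin (k - r) => Set.Icc (-1 + ymax) (1 + ymin)),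
      ind (∀ i j : Fin (k - r), z i - z j ≤ 1))
      = 1 + ((k : ℝ) - (r : ℝ)) * (1 - (ymax - ymin)) :=
  stmt5_general k r hr hrk y ymax ymin hmax hmin hgap
end

section
/- For all integers d ≥ 1, k ≥ 1 and every real δ ∈ (0, 1/4), the Lebesgue integral I := ∫_{W^{k+1}} h_δ(y_0,…,y_k) dy_0 ⋯ dy_k satisfies (1 − 2δ)^d · δ^{dk} · (k+1)^d ≤ I ≤ δ^{dk} · (k+1)^d. -/
open MeasureTheory

/-!
The condition `‖y j - y i‖ ≤ δ` for the sup norm splits over the `d` coordinates, so exchanging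
the two product indices turns the integral into `|A|^d`, where `A ⊆ [-1/2, 1/2]^(k+1)` is the
set of `(k+1)`-tuples of diameter at most `δ`. Labelling a tuple of `A` by the index of its
minimum covers `A` by `k + 1` sets of volume `δ^k`. Conversely, the tuples with minimum
`x_i ∈ [-1/2, 1/2 - δ]` and all other entries in `(x_i, x_i + δ]` form `k + 1` disjoint subsets
of `A`, each of volume `(1 - δ) δ^k`.
-/

open Set ENNReal

theorem measurePreserving_piComm {α β X : Type*} [Fintype α] [Fintype β] [MeasurableSpace X]
    (μ : Measure X) [SigmaFinite μ] :
    MeasurePreserving (fun (y : α → β → X) b a => y a b)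
      (Measure.pi fun _ : α => Measure.pi fun _ : β => μ)
      (Measure.pi fun _ : β => Measure.pi fun _ : α => μ) := by
  refine ⟨by fun_prop, (Measure.pi_eq_generateFrom (fun _ => generateFrom_pi)
    (fun _ => isPiSystem_pi) (fun _ => .pi fun _ => μ.toFiniteSpanningSetsIn) ?_).symm⟩
  intro s hs
  choose t ht hts using hs
  have ht' : ∀ b a, MeasurableSet (t b a) := fun b a => ht b a (mem_univ a)
  have hpre : (fun (y : α → β → X) b a => y a b) ⁻¹' univ.pi s
      = univ.pi fun a => univ.pi fun b => t b a := by
    ext y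
    simp only [mem_preimage, mem_univ_pi, ← hts]
    exact forall_comm
  rw [Measure.map_apply (by fun_prop) (.univ_pi fun b => hts b ▸ .univ_pi (ht' b)), hpre]
  simp only [Measure.pi_pi, ← hts]
  exact Finset.prod_comm

def clusterSet {E : Type*} [SeminormedAddCommGroup E] (κ : Type*) (s : Set E) (δ : ℝ) :
    Set (κ → E) :=
  {y | (∀ j, y j ∈ s) ∧ ∀ i j, ‖y j - y i‖ ≤ δ}

theorem measurableSet_clusterSet {E : Type*} [SeminormedAddCommGroup E] [MeasurableSpace E]
    [MeasurableSub₂ E] [OpensMeasurableSpace E] {κ : Type*} [Countable κ] {s : Set E}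
    (hs : MeasurableSet s) (δ : ℝ) : MeasurableSet (clusterSet κ s δ) := by
  have : clusterSet κ s δ = (⋂ j, (fun y : κ → E => y j) ⁻¹' s) ∩
      ⋂ i, ⋂ j, {y | ‖y j - y i‖ ≤ δ} := by
    ext y; simp [clusterSet]
  rw [this]
  exact (MeasurableSet.iInter fun j => measurable_pi_apply j hs).inter
    (MeasurableSet.iInter fun i => MeasurableSet.iInter fun j =>
      measurableSet_le (by fun_prop) measurable_const)

theorem clusterSet_pi {E ι κ : Type*} [SeminormedAddCommGroup E] [Fintype ι] (s : Set E) {δ : ℝ}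
    (hδ : 0 ≤ δ) :
    clusterSet κ (univ.pi fun _ : ι => s) δ
      = (fun y b a => y a b) ⁻¹' univ.pi fun _ : ι => clusterSet κ s δ := by
  ext y
  simp only [clusterSet, mem_univ_pi, mem_preimage, mem_ofPred_eq, pi_norm_le_iff_of_nonneg hδ,
    Pi.sub_apply]
  grind

theorem volume_clusterSet_pi {ι κ : Type*} [Fintype ι] [Fintype κ] {s : Set ℝ}
    (hs : MeasurableSet s) {δ : ℝ} (hδ : 0 ≤ δ) :
    volume (clusterSet κ (univ.pi fun _ : ι => s) δ)
      = volume (clusterSet κ s δ) ^ Fintype.card ι := by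
  have hswap : MeasurePreserving (fun (y : κ → ι → ℝ) b a => y a b) volume volume :=
    measurePreserving_piComm volume
  rw [clusterSet_pi s hδ, hswap.measure_preimage
    (MeasurableSet.univ_pi fun _ => measurableSet_clusterSet hs δ).nullMeasurableSet,
    volume_pi_pi, Finset.prod_const, Finset.card_univ]

theorem volume_setOf_succAbove_sub_mem {n : ℕ} (i : Fin (n + 1)) {s T : Set ℝ}
    (hs : MeasurableSet s) (hT : MeasurableSet T) :
    volume {x : Fin (n + 1) → ℝ | x i ∈ s ∧ ∀ j, x (i.succAbove j) - x i ∈ T}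
      = volume s * volume T ^ n := by
  set S : Set (ℝ × (Fin n → ℝ)) := {p | p.1 ∈ s ∧ ∀ j, p.2 j - p.1 ∈ T}
  have hS : MeasurableSet S := by measurability
  have hsection : ∀ a, volume (Prod.mk a ⁻¹' S) = s.indicator (fun _ => volume T ^ n) a := by
    intro a
    by_cases ha : a ∈ s
    · have : Prod.mk a ⁻¹' S = univ.pi fun _ => (· - a) ⁻¹' T := by ext z; simp [S, ha]
      simp [this, ha, volume_pi_pi,
        (measurePreserving_sub_right volume a).measure_preimage hT.nullMeasurableSet]
    · have : Prod.mk a ⁻¹' S = ∅ := by ext z; simp [S, ha]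
      simp [this, ha]
  have hsplit := (volume_preserving_piFinSuccAbove (fun _ : Fin (n + 1) => ℝ) i).measure_preimage
    hS.nullMeasurableSet
  rw [show {x : Fin (n + 1) → ℝ | x i ∈ s ∧ ∀ j, x (i.succAbove j) - x i ∈ T}
      = MeasurableEquiv.piFinSuccAbove (fun _ => ℝ) i ⁻¹' S from rfl,
    hsplit, Measure.volume_eq_prod, Measure.prod_apply hS]
  simp_rw [hsection]
  rw [lintegral_indicator_const hs, mul_comm]

theorem volume_clusterSet_Icc_le (n : ℕ) (a b δ : ℝ) :
    volume (clusterSet (Fin (n + 1)) (Icc a b) δ)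
      ≤ (n + 1) * ENNReal.ofReal (b - a) * ENNReal.ofReal δ ^ n := by
  set C : Fin (n + 1) → Set (Fin (n + 1) → ℝ) :=
    fun i => {x | x i ∈ Icc a b ∧ ∀ j, x (i.succAbove j) - x i ∈ Icc 0 δ}
  have hcover : clusterSet (Fin (n + 1)) (Icc a b) δ ⊆ ⋃ i, C i := by
    rintro x ⟨hxs, hxδ⟩
    obtain ⟨i, hi⟩ := Finite.exists_min x
    exact mem_iUnion.2
      ⟨i, hxs i, fun j => ⟨sub_nonneg.2 (hi _), (le_abs_self _).trans (hxδ i _)⟩⟩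
  calc volume _ ≤ ∑ i, volume (C i) :=
        (measure_mono hcover).trans (measure_iUnion_fintype_le _ _)
    _ = _ := by
        simp only [C, volume_setOf_succAbove_sub_mem _ measurableSet_Icc measurableSet_Icc,
          Real.volume_Icc, sub_zero, Finset.sum_const, Finset.card_univ, Fintype.card_fin,
          nsmul_eq_mul]
        push_cast
        ring

theorem le_volume_clusterSet_Icc (n : ℕ) (a b : ℝ) {δ : ℝ} (hδ : 0 ≤ δ) :
    (n + 1) * ENNReal.ofReal (b - δ - a) * ENNReal.ofReal δ ^ n
      ≤ volume (clusterSet (Fin (n + 1)) (Icc a b) δ) := by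
  -- The minimum `x i` is strict on `B i`, which makes the `B i` disjoint.
  set B : Fin (n + 1) → Set (Fin (n + 1) → ℝ) :=
    fun i => {x | x i ∈ Icc a (b - δ) ∧ ∀ j, x (i.succAbove j) - x i ∈ Ioc 0 δ}
  have hB : ∀ i, MeasurableSet (B i) := fun i => by measurability
  have hdisj : Pairwise (Function.onFun Disjoint B) := by
    intro i i' hne
    rw [Function.onFun, disjoint_left]
    rintro x ⟨-, hx⟩ ⟨-, hx'⟩
    obtain ⟨j, rfl⟩ := Fin.exists_succAbove_eq hne.symm
    obtain ⟨j', hj'⟩ := Fin.exists_succAbove_eq hne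
    have := (hx' j').1
    rw [hj'] at this
    linarith [(hx j).1]
  have hsub : ⋃ i, B i ⊆ clusterSet (Fin (n + 1)) (Icc a b) δ := by
    refine iUnion_subset fun i x ⟨⟨ha, hb⟩, hx⟩ => ?_
    have hnear : ∀ j, x i ≤ x j ∧ x j ≤ x i + δ := by
      intro j
      rcases eq_or_ne j i with rfl | hne
      · exact ⟨le_rfl, by linarith⟩
      · obtain ⟨j', rfl⟩ := Fin.exists_succAbove_eq hne
        exact ⟨by linarith [(hx j').1], by linarith [(hx j').2]⟩
    refine ⟨fun j => ⟨by linarith [hnear j], by linarith [hnear j]⟩, fun j j' => ?_⟩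
    rw [Real.norm_eq_abs, abs_sub_le_iff]
    constructor <;> linarith [hnear j, hnear j']
  calc _ = ∑ i, volume (B i) := by
        simp only [B, volume_setOf_succAbove_sub_mem _ measurableSet_Icc measurableSet_Ioc,
          Real.volume_Icc, Real.volume_Ioc, sub_zero, Finset.sum_const, Finset.card_univ,
          Fintype.card_fin, nsmul_eq_mul]
        push_cast
        ring
    _ = volume (⋃ i, B i) := by rw [measure_iUnion hdisj hB, tsum_fintype]
    _ ≤ _ := measure_mono hsub

theorem measureReal_clusterSet_Icc_le (n : ℕ) {a b δ : ℝ} (hab : a ≤ b) (hδ : 0 ≤ δ) :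
    volume.real (clusterSet (Fin (n + 1)) (Icc a b) δ) ≤ (n + 1) * (b - a) * δ ^ n := by
  have := ENNReal.toReal_mono (by finiteness) (volume_clusterSet_Icc_le n a b δ)
  simpa [measureReal_def, toReal_ofReal, ENNReal.toReal_add, hδ, hab] using this

theorem le_measureReal_clusterSet_Icc (n : ℕ) {a b δ : ℝ} (hδ : 0 ≤ δ) (hδb : δ ≤ b - a) :
    (n + 1) * (b - δ - a) * δ ^ n ≤ volume.real (clusterSet (Fin (n + 1)) (Icc a b) δ) := by
  have hfin : volume (clusterSet (Fin (n + 1)) (Icc a b) δ) ≠ ⊤ :=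
    ((isCompact_univ_pi fun _ => isCompact_Icc).measure_lt_top.trans_le'
      (measure_mono fun x hx => mem_univ_pi.2 hx.1)).ne
  have := ENNReal.toReal_mono hfin (le_volume_clusterSet_Icc n a b hδ)
  simpa [measureReal_def, toReal_ofReal, ENNReal.toReal_add, hδ, show 0 ≤ b - δ - a by linarith]
    using this

theorem setIntegral_ind_eq_measureReal_clusterSet {E κ : Type*} [NormedAddCommGroup E]
    [MeasurableSpace E] [MeasurableSub₂ E] [OpensMeasurableSpace E] [Countable κ]
    (μ : Measure (κ → E)) (s : Set E) (δ : ℝ) :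
    ∫ y in univ.pi (fun _ : κ => s), ind (∀ i j, ‖y j - y i‖ ≤ δ) ∂μ
      = μ.real (clusterSet κ s δ) := by
  have hind : (fun y : κ → E => ind (∀ i j, ‖y j - y i‖ ≤ δ))
      = (clusterSet κ univ δ).indicator 1 := by
    ext y
    by_cases h : ∀ i j, ‖y j - y i‖ ≤ δ <;> simp [ind, h, clusterSet]
  have hinter : univ.pi (fun _ : κ => s) ∩ clusterSet κ univ δ = clusterSet κ s δ := by
    ext y
    simp [clusterSet]
  rw [hind, setIntegral_indicator (measurableSet_clusterSet MeasurableSet.univ δ), hinter]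
  simp

theorem stmt8_general (d k : ℕ) (δ : ℝ) (hδ : δ ∈ Set.Ioo (0 : ℝ) (1/4)) :
    (1 - 2 * δ) ^ d * δ ^ (d * k) * ((k : ℝ) + 1) ^ d ≤
      (∫ y in (Set.univ.pi fun _ : Fin (k + 1) =>
          (Set.univ.pi fun _ : Fin d => Set.Icc (-(1/2) : ℝ) (1/2))),
        ind (∀ i j : Fin (k + 1), ‖y j - y i‖ ≤ δ)) ∧
    (∫ y in (Set.univ.pi fun _ : Fin (k + 1) =>
        (Set.univ.pi fun _ : Fin d => Set.Icc (-(1/2) : ℝ) (1/2))),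
      ind (∀ i j : Fin (k + 1), ‖y j - y i‖ ≤ δ)) ≤
      δ ^ (d * k) * ((k : ℝ) + 1) ^ d := by
  obtain ⟨hδ0, hδ1⟩ := hδ
  rw [setIntegral_ind_eq_measureReal_clusterSet, measureReal_def,
    volume_clusterSet_pi measurableSet_Icc hδ0.le, toReal_pow, Fintype.card_fin, ← measureReal_def]
  set J := volume.real (clusterSet (Fin (k + 1)) (Icc (-(1/2) : ℝ) (1/2)) δ)
  have hJ_le : J ≤ (k + 1) * δ ^ k :=
    (measureReal_clusterSet_Icc_le k (by norm_num) hδ0.le).trans_eq (by ring)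
  have hle_J : (k + 1) * (1 - 2 * δ) * δ ^ k ≤ J := by
    refine le_trans ?_ (le_measureReal_clusterSet_Icc k hδ0.le (by linarith))
    exact mul_le_mul_of_nonneg_right (mul_le_mul_of_nonneg_left (by linarith) (by positivity))
      (by positivity)
  constructor
  · calc (1 - 2 * δ) ^ d * δ ^ (d * k) * ((k : ℝ) + 1) ^ d
        = ((k + 1) * (1 - 2 * δ) * δ ^ k) ^ d := by rw [mul_pow, mul_pow, ← pow_mul']; ring
      _ ≤ J ^ d := pow_le_pow_left₀ (by nlinarith [pow_pos hδ0 k]) hle_J d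
  · calc J ^ d ≤ ((k + 1) * δ ^ k) ^ d := pow_le_pow_left₀ measureReal_nonneg hJ_le d
      _ = δ ^ (d * k) * ((k : ℝ) + 1) ^ d := by rw [mul_pow, ← pow_mul']; ring

/-- For all integers `d ≥ 1`, `k ≥ 1` and every `δ ∈ (0, 1/4)`, the
integral `I := ∫_{W^{k+1}} h_δ(y_0,…,y_k) dy` over `W = [−1/2,1/2]^d ⊂ ℝ^d` satisfies
`(1 − 2δ)^d · δ^{dk} · (k+1)^d ≤ I ≤ δ^{dk} · (k+1)^d`.
Here `ℝ^d` carries the `ℓ^∞` norm. -/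
theorem stmt8 (d k : ℕ) (hd : 1 ≤ d) (hk : 1 ≤ k) (δ : ℝ) (hδ : δ ∈ Set.Ioo (0 : ℝ) (1/4)) :
    (1 - 2 * δ) ^ d * δ ^ (d * k) * ((k : ℝ) + 1) ^ d ≤
      (∫ y in (Set.univ.pi fun _ : Fin (k + 1) =>
          (Set.univ.pi fun _ : Fin d => Set.Icc (-(1/2) : ℝ) (1/2))),
        ind (∀ i j : Fin (k + 1), ‖y j - y i‖ ≤ δ)) ∧
    (∫ y in (Set.univ.pi fun _ : Fin (k + 1) =>
        (Set.univ.pi fun _ : Fin d => Set.Icc (-(1/2) : ℝ) (1/2))),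
      ind (∀ i j : Fin (k + 1), ‖y j - y i‖ ≤ δ)) ≤
      δ ^ (d * k) * ((k : ℝ) + 1) ^ d :=
  stmt8_general d k δ hδ
end

section
/- For all integers d ≥ 1, k ≥ 1, every integer r with 1 ≤ r ≤ k and every real δ ∈ (0, 1/4), the Lebesgue integral I_r := ∫_{W^{2k+2−r}} h_δ(y_0,…,y_k) · h_δ(y_0,…,y_{r−1}, z_0,…,z_{k−r}) dy_0 ⋯ dy_k dz_0 ⋯ dz_{k−r} satisfies (1 − 2δ)^d · δ^{d(2k+1−r)} · ( 2(k+2)(k+1−r)/(r+1) + r )^d ≤ I_r ≤ δ^{d(2k+1−r)} · ( 2(k+2)(k+1−r)/(r+1) + r )^d. -/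
/-!
In the sup norm, `h_δ` factorises over the coordinates, so the integral is the `d`-th power of
its one-dimensional analogue. In one dimension, write every point relative to `y₀ = w`: the
centred configuration does not depend on `w`, and the box constraints hold automatically for
`|w| ≤ 1/2 - δ` and fail for `|w| > 1/2`, which gives the factor between `1 - 2δ` and `1`.

The volume of centred configurations is computed by adding the `r - 1` shared points one at a
time. Once the shared points span an interval of length `s`, the `m = k + 1 - r` free points of
each clique independently range over a set of volume `(m + 1) δ^m - m s δ^(m-1)`; adding a shared
point transforms a function `g` of the span into `s g(s) + 2 ∫_s^δ g`. Iterating this `r - 1`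
times on the square of that volume and evaluating at `s = 0` gives
`δ^(2k+1-r) (2(k+2)(k+1-r)/(r+1) + r)`.
-/

open MeasureTheory

/-- All points of a set `P ⊆ ℝ^d` (with the sup norm) are pairwise within distance `δ`. -/
def closeP {d : ℕ} (δ : ℝ) (P : Set (Fin d → ℝ)) : Prop :=
  ∀ a ∈ P, ∀ b ∈ P, ‖a - b‖ ≤ δ

open Set

noncomputable section

namespace CliquePair

section Measure

variable {α β : Type*} [MeasureSpace α] [SigmaFinite (volume : Measure α)]
  [MeasureSpace β] [SigmaFinite (volume : Measure β)]

lemma volume_preserving_finCons (n : ℕ) :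
    MeasurePreserving (fun p : α × (Fin n → α) => (Fin.cons p.1 p.2 : Fin (n + 1) → α)) := by
  convert (volume_preserving_piFinSuccAbove (fun _ : Fin (n + 1) => α) 0).symm _ using 1
  funext p
  simp [MeasurableEquiv.piFinSuccAbove]
  rfl

lemma volume_preserving_finCons_prod (n : ℕ) :
    MeasurePreserving (fun q : α × ((Fin n → α) × β) =>
      ((Fin.cons q.1 q.2.1 : Fin (n + 1) → α), q.2.2)) :=
  ((volume_preserving_finCons n).prod (MeasurePreserving.id _)).comp
    (volume_preserving_prodAssoc.symm MeasurableEquiv.prodAssoc)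

lemma volume_preserving_finAppend (j m : ℕ) :
    MeasurePreserving (fun p : (Fin j → α) × (Fin m → α) => Fin.append p.1 p.2) := by
  have h : (fun p : (Fin j → α) × (Fin m → α) => Fin.append p.1 p.2) =
      MeasurableEquiv.arrowCongr' finSumFinEquiv (MeasurableEquiv.refl α) ∘
        (MeasurableEquiv.sumPiEquivProdPi fun _ : Fin j ⊕ Fin m => α).symm := by
    funext p i
    refine Fin.addCases (fun i => ?_) (fun i => ?_) i <;>
      simp [MeasurableEquiv.arrowCongr', Equiv.arrowCongr', Equiv.arrowCongr,
        MeasurableEquiv.coe_sumPiEquivProdPi_symm]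
  rw [h]
  exact (volume_preserving_arrowCongr' _ _ (MeasurePreserving.id volume)).comp
    (volume_measurePreserving_sumPiEquivProdPi_symm _)

variable {ι κ : Type*} [Fintype ι] [Fintype κ]

lemma volume_preserving_uncurry :
    MeasurePreserving (MeasurableEquiv.curry ι κ α).symm := by
  refine ⟨(MeasurableEquiv.curry ι κ α).symm.measurable, (Measure.pi_eq fun s _ => ?_).symm⟩
  have hpre : (MeasurableEquiv.curry ι κ α).symm ⁻¹' univ.pi s =
      univ.pi fun i => univ.pi fun c => s (i, c) := by
    ext f
    simp [MeasurableEquiv.coe_curry_symm]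
  rw [MeasurableEquiv.map_apply, hpre, volume_pi_pi, Fintype.prod_prod_type]
  simp only [volume_pi_pi]

lemma volume_preserving_swap : MeasurePreserving (Function.swap : (ι → κ → α) → κ → ι → α) := by
  have h : (Function.swap : (ι → κ → α) → κ → ι → α) =
      MeasurableEquiv.curry κ ι α ∘
        MeasurableEquiv.arrowCongr' (Equiv.prodComm ι κ) (MeasurableEquiv.refl α) ∘
          (MeasurableEquiv.curry ι κ α).symm := by
    funext f c i
    rfl
  rw [h]
  exact volume_preserving_uncurry.symm _ |>.comp <|
    (volume_preserving_arrowCongr' _ _ (MeasurePreserving.id volume)).comp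
      volume_preserving_uncurry

lemma volume_preserving_add_diag :
    MeasurePreserving fun q : ℝ × ((ι → ℝ) × (κ → ℝ)) =>
      (q.1, ((fun i => q.2.1 i + q.1), fun t => q.2.2 t + q.1)) :=
  (MeasurePreserving.id volume).skew_product
    (g := fun (w : ℝ) (p : (ι → ℝ) × (κ → ℝ)) => ((fun i => p.1 i + w), fun t => p.2 t + w))
    (by fun_prop : Measurable fun q : ℝ × ((ι → ℝ) × (κ → ℝ)) =>
      ((fun i => q.2.1 i + q.1), fun t => q.2.2 t + q.1)) <| ae_of_all _ fun w =>
    ((measurePreserving_add_right volume fun _ => w).prod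
      (measurePreserving_add_right volume fun _ => w)).map_eq

end Measure

lemma setIntegral_ind_mul_ind {X : Type*} [MeasurableSpace X] (μ : Measure X) (s : Set X)
    {P Q : X → Prop} (h : MeasurableSet {x | P x ∧ Q x}) :
    ∫ x in s, ind (P x) * ind (Q x) ∂μ = μ.real ({x | P x ∧ Q x} ∩ s) := by
  have hind : (fun x => ind (P x) * ind (Q x)) = {x | P x ∧ Q x}.indicator 1 := by
    funext x
    by_cases hP : P x <;> by_cases hQ : Q x <;> simp [ind, hP, hQ]
  rw [hind, integral_indicator_one h, measureReal_restrict_apply h]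

lemma integral_const_sub_mul_add_mul_pow (a b A B K : ℝ) (p : ℕ) :
    ∫ t in a..b, (A - B * t + K * t ^ p) =
      A * (b - a) - B * ((b ^ 2 - a ^ 2) / 2) + K * ((b ^ (p + 1) - a ^ (p + 1)) / (p + 1)) := by
  rw [intervalIntegral.integral_add (Continuous.intervalIntegrable (by fun_prop) _ _)
      (Continuous.intervalIntegrable (by fun_prop) _ _),
    intervalIntegral.integral_sub intervalIntegrable_const
      (Continuous.intervalIntegrable (by fun_prop) _ _),
    intervalIntegral.integral_const, intervalIntegral.integral_const_mul,
    intervalIntegral.integral_const_mul, integral_id, integral_pow, smul_eq_mul]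
  ring

variable (δ : ℝ)

/-- Adding one more point to a `δ`-clique of span `s`: the new point ranges over a window of
length `2δ - s`; on a length `s` the span is unchanged, on each side it grows to `t ∈ [s, δ]`. -/
def spanStep (g : ℝ → ℝ) (s : ℝ) : ℝ := s * g s + 2 * ∫ t in s..δ, g t

lemma spanStep_nonneg {g : ℝ → ℝ} (hg : ∀ t ∈ Icc 0 δ, 0 ≤ g t) {s : ℝ} (hs : s ∈ Icc 0 δ) :
    0 ≤ spanStep δ g s := by
  have hint : 0 ≤ ∫ t in s..δ, g t :=
    intervalIntegral.integral_nonneg hs.2 fun t ht => hg t ⟨hs.1.trans ht.1, ht.2⟩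
  have := mul_nonneg hs.1 (hg s hs)
  unfold spanStep
  positivity

lemma nonneg_of_spanStep {G : ℕ → ℝ → ℝ} (h0 : ∀ s ∈ Icc 0 δ, 0 ≤ G 0 s)
    (hstep : ∀ j, spanStep δ (G j) = G (j + 1)) (j : ℕ) : ∀ s ∈ Icc 0 δ, 0 ≤ G j s := by
  induction j with
  | zero => exact h0
  | succ j ih => exact fun s hs => hstep j ▸ spanStep_nonneg δ ih hs

def windowVol (n : ℕ) (s : ℝ) : ℝ := (n + 1) * δ ^ n - n * s * δ ^ (n - 1)

lemma windowVol_zero (s : ℝ) : windowVol δ 0 s = 1 := by simp [windowVol]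

lemma spanStep_windowVol (n : ℕ) : spanStep δ (windowVol δ n) = windowVol δ (n + 1) := by
  funext s
  cases n with
  | zero =>
    have h : windowVol δ 0 = fun t => 1 - 0 * t + 0 * t ^ 0 := by funext t; simp [windowVol]
    rw [spanStep, h, integral_const_sub_mul_add_mul_pow]
    simp [windowVol]
    ring
  | succ n =>
    have h : windowVol δ (n + 1) = fun t => (n + 2) * δ ^ (n + 1) - ((n + 1) * δ ^ n) * t
        + 0 * t ^ 0 := by
      funext t; simp [windowVol]; ring
    rw [spanStep, h, integral_const_sub_mul_add_mul_pow]
    simp only [windowVol, Nat.add_sub_cancel]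
    push_cast
    ring

/-- `iterQuad δ C₀ C₁ C₂ j` is the `j`-fold `spanStep` of `C₀ - C₁ s + C₂ s²`. -/
def iterQuad (C₀ C₁ C₂ : ℝ) (j : ℕ) (s : ℝ) : ℝ :=
  ((j + 1) * C₀ * δ ^ j - j * C₁ * δ ^ (j + 1) + j * (j + 1) / (j + 2) * C₂ * δ ^ (j + 2))
    - (j * C₀ * δ ^ (j - 1) - (j - 1) * C₁ * δ ^ j + j * (j - 1) / (j + 1) * C₂ * δ ^ (j + 1)) * s
    + 2 * C₂ / ((j + 1) * (j + 2)) * s ^ (j + 2)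

lemma spanStep_iterQuad (C₀ C₁ C₂ : ℝ) (j : ℕ) :
    spanStep δ (iterQuad δ C₀ C₁ C₂ j) = iterQuad δ C₀ C₁ C₂ (j + 1) := by
  funext s
  rw [spanStep]
  unfold iterQuad
  rw [integral_const_sub_mul_add_mul_pow]
  cases j with
  | zero =>
    norm_num
    ring
  | succ i =>
    simp only [Nat.add_sub_cancel]
    push_cast
    have h2 : (i : ℝ) + 2 ≠ 0 := by positivity
    have h3 : (i : ℝ) + 3 ≠ 0 := by positivity
    have h4 : (i : ℝ) + 4 ≠ 0 := by positivity
    field_simp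
    ring

def pairVol (m : ℕ) : ℕ → ℝ → ℝ :=
  iterQuad δ ((m + 1) ^ 2 * δ ^ (2 * m)) (2 * m * (m + 1) * δ ^ (2 * m - 1))
    (m ^ 2 * δ ^ (2 * m - 2))

lemma pairVol_zero (m : ℕ) (s : ℝ) : pairVol δ m 0 s = windowVol δ m s ^ 2 := by
  cases m with
  | zero => simp [pairVol, iterQuad, windowVol]
  | succ i =>
    simp only [pairVol, iterQuad, windowVol, Nat.add_sub_cancel,
      show 2 * (i + 1) - 1 = 2 * i + 1 by omega, show 2 * (i + 1) - 2 = 2 * i by omega]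
    push_cast
    ring

lemma pairVol_apply_zero (m j : ℕ) :
    pairVol δ m j 0 = δ ^ (2 * m + j) * (2 * (j + m + 2) * m / (j + 2) + (j + 1)) := by
  have hj : (j : ℝ) + 2 ≠ 0 := by positivity
  cases m with
  | zero => simp [pairVol, iterQuad]; ring
  | succ i =>
    simp only [pairVol, iterQuad, show 2 * (i + 1) - 1 = 2 * i + 1 by omega,
      show 2 * (i + 1) - 2 = 2 * i by omega]
    push_cast
    field_simp
    ring

/-- `c` can be added to a `δ`-clique with minimum `x` and maximum `y`. -/
def Fits {ι : Type*} (x y : ℝ) (c : ι → ℝ) : Prop :=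
  (∀ i, c i ∈ Icc (y - δ) (x + δ)) ∧ ∀ i i', |c i - c i'| ≤ δ

def foldMin : {j : ℕ} → ℝ → (Fin j → ℝ) → ℝ
  | 0, x, _ => x
  | _ + 1, x, c => foldMin (min x (c 0)) (Fin.tail c)

def foldMax : {j : ℕ} → ℝ → (Fin j → ℝ) → ℝ
  | 0, y, _ => y
  | _ + 1, y, c => foldMax (max y (c 0)) (Fin.tail c)

@[simp] lemma foldMin_cons {j : ℕ} (x w : ℝ) (c : Fin j → ℝ) :
    foldMin x (Fin.cons w c) = foldMin (min x w) c := by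
  simp [foldMin]

@[simp] lemma foldMax_cons {j : ℕ} (y w : ℝ) (c : Fin j → ℝ) :
    foldMax y (Fin.cons w c) = foldMax (max y w) c := by
  simp [foldMax]

lemma continuous_foldMin {j : ℕ} : Continuous fun q : ℝ × (Fin j → ℝ) => foldMin q.1 q.2 := by
  induction j with
  | zero => exact continuous_fst
  | succ n ih =>
    exact ih.comp ((continuous_fst.min ((continuous_apply 0).comp continuous_snd)).prodMk
      (continuous_pi fun i : Fin n => (continuous_apply i.succ).comp continuous_snd))

lemma continuous_foldMax {j : ℕ} : Continuous fun q : ℝ × (Fin j → ℝ) => foldMax q.1 q.2 := by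
  induction j with
  | zero => exact continuous_fst
  | succ n ih =>
    exact ih.comp ((continuous_fst.max ((continuous_apply 0).comp continuous_snd)).prodMk
      (continuous_pi fun i : Fin n => (continuous_apply i.succ).comp continuous_snd))

lemma isClosed_fits {ι : Type*} [Finite ι] :
    IsClosed {q : (ℝ × ℝ) × (ι → ℝ) | Fits δ q.1.1 q.1.2 q.2} := by
  simp only [Fits, mem_Icc, ofPred_and, ofPred_forall]
  refine (isClosed_iInter fun i => IsClosed.inter ?_ ?_).inter
    (isClosed_iInter fun i => isClosed_iInter fun i' => isClosed_le (by fun_prop) (by fun_prop))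
  all_goals exact isClosed_le (by fun_prop) (by fun_prop)

lemma mem_Icc_max_min_iff {x y w z : ℝ} :
    z ∈ Icc (max y w - δ) (min x w + δ) ↔ z ∈ Icc (y - δ) (x + δ) ∧ |z - w| ≤ δ := by
  simp only [mem_Icc, abs_le, sub_le_iff_le_add, max_le_iff, ← min_add_add_right, le_min_iff]
  grind

lemma fits_cons_iff (hδ : 0 ≤ δ) {j : ℕ} {x y w : ℝ} {c : Fin j → ℝ} :
    Fits δ x y (Fin.cons w c : Fin (j + 1) → ℝ) ↔
      w ∈ Icc (y - δ) (x + δ) ∧ Fits δ (min x w) (max y w) c := by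
  simp only [Fits, Fin.forall_fin_succ, Fin.cons_zero, Fin.cons_succ, mem_Icc_max_min_iff,
    sub_self, abs_zero, hδ, true_and, forall_and, abs_sub_comm w]
  tauto

lemma max_sub_min_le_of_mem_window {x y w : ℝ} (hxy : x ≤ y) (hyx : y - x ≤ δ)
    (hw : w ∈ Icc (y - δ) (x + δ)) :
    min x w ≤ max y w ∧ max y w - min x w ≤ δ := by
  obtain ⟨h1, h2⟩ := hw
  constructor
  · exact (min_le_left x w).trans (hxy.trans (le_max_left y w))
  · simp only [sub_le_iff_le_add, max_le_iff]
    grind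

lemma integral_window {g : ℝ → ℝ} (hg : Continuous g) {x y : ℝ} (hxy : x ≤ y)
    (hyx : y - x ≤ δ) :
    ∫ w in (y - δ)..(x + δ), g (max y w - min x w) = spanStep δ g (y - x) := by
  have hint : ∀ a b, IntervalIntegrable (fun w => g (max y w - min x w)) volume a b :=
    fun a b => (by fun_prop : Continuous fun w => g (max y w - min x w)).intervalIntegrable a b
  rw [← intervalIntegral.integral_add_adjacent_intervals (hint _ x) (hint x _),
    ← intervalIntegral.integral_add_adjacent_intervals (hint x y) (hint y _)]
  have hleft : ∫ w in (y - δ)..x, g (max y w - min x w) = ∫ w in (y - δ)..x, g (y - w) := by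
    refine intervalIntegral.integral_congr fun w hw => ?_
    rw [uIcc_of_le (by linarith)] at hw
    simp only [min_eq_right hw.2, max_eq_left (hw.2.trans hxy)]
  have hmid : ∫ w in x..y, g (max y w - min x w) = ∫ w in x..y, g (y - x) := by
    refine intervalIntegral.integral_congr fun w hw => ?_
    rw [uIcc_of_le hxy] at hw
    simp only [min_eq_left hw.1, max_eq_left hw.2]
  have hright : ∫ w in y..(x + δ), g (max y w - min x w) = ∫ w in y..(x + δ), g (w - x) := by
    refine intervalIntegral.integral_congr fun w hw => ?_
    rw [uIcc_of_le (by linarith)] at hw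
    simp only [min_eq_left (hxy.trans hw.1), max_eq_right hw.1]
  rw [hleft, hmid, hright, intervalIntegral.integral_comp_sub_left (fun t => g t) y,
    intervalIntegral.integral_comp_sub_right (fun t => g t) x, intervalIntegral.integral_const,
    sub_sub_cancel, add_sub_cancel_left, smul_eq_mul, spanStep]
  ring

lemma lintegral_window {g : ℝ → ℝ} (hg : Continuous g) (hg0 : ∀ t ∈ Icc 0 δ, 0 ≤ g t)
    {x y : ℝ} (hxy : x ≤ y) (hyx : y - x ≤ δ) :
    ∫⁻ w in Icc (y - δ) (x + δ), ENNReal.ofReal (g (max y w - min x w)) =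
      ENNReal.ofReal (spanStep δ g (y - x)) := by
  rw [← integral_window δ hg hxy hyx, intervalIntegral.integral_of_le (by linarith),
    ← integral_Icc_eq_integral_Ioc, ofReal_integral_eq_lintegral_ofReal]
  · exact (by fun_prop : Continuous fun w => g (max y w - min x w)).integrableOn_Icc
  · filter_upwards [ae_restrict_mem measurableSet_Icc] with w hw
    obtain ⟨h0, h1⟩ := max_sub_min_le_of_mem_window δ hxy hyx hw
    exact hg0 _ ⟨sub_nonneg.2 h0, h1⟩

section Recursion

variable {β : Type*} [MeasureSpace β]

/-- `K x y` is the set of admissible further data once the clique spans `[x, y]`. -/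
def fitsSet (K : ℝ → ℝ → Set β) (j : ℕ) (x y : ℝ) : Set ((Fin j → ℝ) × β) :=
  {q | Fits δ x y q.1 ∧ q.2 ∈ K (foldMin x q.1) (foldMax y q.1)}

lemma measurableSet_fitsSet {K : ℝ → ℝ → Set β}
    (hK : MeasurableSet {q : (ℝ × ℝ) × β | q.2 ∈ K q.1.1 q.1.2}) (j : ℕ) (x y : ℝ) :
    MeasurableSet (fitsSet δ K j x y) := by
  have hfits : Measurable fun q : (Fin j → ℝ) × β => ((x, y), q.1) := by fun_prop
  have hfold : Measurable fun q : (Fin j → ℝ) × β => ((foldMin x q.1, foldMax y q.1), q.2) :=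
    ((continuous_foldMin.measurable.comp (measurable_const.prodMk measurable_fst)).prodMk
      (continuous_foldMax.measurable.comp (measurable_const.prodMk measurable_fst))).prodMk
      measurable_snd
  exact (hfits (isClosed_fits δ).measurableSet).inter (hfold hK)

lemma volume_fitsSet [SigmaFinite (volume : Measure β)] {K : ℝ → ℝ → Set β}
    (hK : MeasurableSet {q : (ℝ × ℝ) × β | q.2 ∈ K q.1.1 q.1.2}) {G : ℕ → ℝ → ℝ}
    (hG : ∀ j, Continuous (G j)) (hG0 : ∀ s ∈ Icc 0 δ, 0 ≤ G 0 s)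
    (hstep : ∀ j, spanStep δ (G j) = G (j + 1))
    (hK0 : ∀ x y, x ≤ y → y - x ≤ δ → volume (K x y) = ENNReal.ofReal (G 0 (y - x)))
    (j : ℕ) {x y : ℝ} (hxy : x ≤ y) (hyx : y - x ≤ δ) :
    volume (fitsSet δ K j x y) = ENNReal.ofReal (G j (y - x)) := by
  have hδ : 0 ≤ δ := by linarith
  induction j generalizing x y with
  | zero =>
    have h : fitsSet δ K 0 x y = univ ×ˢ K x y := by
      ext q
      simp [fitsSet, Fits, foldMin, foldMax]
    rw [h, Measure.volume_eq_prod, Measure.prod_prod, hK0 x y hxy hyx, volume_pi,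
      Measure.pi_empty_univ, one_mul]
  | succ n ih =>
    have hF := volume_preserving_finCons_prod (α := ℝ) (β := β) n
    have hS := measurableSet_fitsSet δ hK (n + 1) x y
    have hslice : ∀ w, volume (Prod.mk w ⁻¹'
        ((fun q : ℝ × ((Fin n → ℝ) × β) => ((Fin.cons q.1 q.2.1 : Fin (n + 1) → ℝ), q.2.2)) ⁻¹'
          fitsSet δ K (n + 1) x y)) =
        (Icc (y - δ) (x + δ)).indicator
          (fun w => ENNReal.ofReal (G n (max y w - min x w))) w := by
      intro w
      by_cases hw : w ∈ Icc (y - δ) (x + δ)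
      · obtain ⟨h1, h2⟩ := max_sub_min_le_of_mem_window δ hxy hyx hw
        rw [indicator_of_mem hw, ← ih h1 h2]
        congr 1
        ext ⟨u, p⟩
        simp only [fitsSet, mem_preimage, mem_ofPred_eq, fits_cons_iff δ hδ, foldMin_cons,
          foldMax_cons, hw, true_and]
      · rw [indicator_of_notMem hw, ← measure_empty (μ := (volume : Measure ((Fin n → ℝ) × β)))]
        congr 1
        ext ⟨u, p⟩
        simp only [fitsSet, mem_preimage, mem_ofPred_eq, fits_cons_iff δ hδ, hw, false_and,
          mem_empty_iff_false]
    rw [← hF.measure_preimage hS.nullMeasurableSet, Measure.volume_eq_prod,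
      Measure.prod_apply (hF.measurable hS), lintegral_congr hslice,
      lintegral_indicator measurableSet_Icc,
      lintegral_window δ (hG n) (nonneg_of_spanStep δ hG0 hstep n) hxy hyx, hstep]

end Recursion

lemma volume_fin_zero_univ : volume (univ : Set (Fin 0 → ℝ)) = 1 := by
  rw [volume_pi, Measure.pi_empty_univ]

lemma volume_fits (m : ℕ) {x y : ℝ} (hxy : x ≤ y) (hyx : y - x ≤ δ) :
    volume {c : Fin m → ℝ | Fits δ x y c} = ENNReal.ofReal (windowVol δ m (y - x)) := by
  have h := volume_fitsSet δ (K := fun _ _ => (univ : Set (Fin 0 → ℝ))) (by simp)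
    (fun n => by unfold windowVol; fun_prop) (by simp [windowVol_zero]) (spanStep_windowVol δ)
    (fun _ _ _ _ => by rw [volume_fin_zero_univ, windowVol_zero, ENNReal.ofReal_one]) m hxy hyx
  rwa [show fitsSet δ (fun _ _ => univ) m x y = {c | Fits δ x y c} ×ˢ univ by ext; simp [fitsSet],
    Measure.volume_eq_prod, Measure.prod_prod, volume_fin_zero_univ, mul_one] at h

def pairFits (m : ℕ) (x y : ℝ) : Set ((Fin m → ℝ) × (Fin m → ℝ)) :=
  {c | Fits δ x y c} ×ˢ {c | Fits δ x y c}

lemma measurableSet_pairFits (m : ℕ) :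
    MeasurableSet {q : (ℝ × ℝ) × ((Fin m → ℝ) × (Fin m → ℝ)) | q.2 ∈ pairFits δ m q.1.1 q.1.2} :=
  (((isClosed_fits δ).preimage (by fun_prop : Continuous fun q :
      (ℝ × ℝ) × ((Fin m → ℝ) × (Fin m → ℝ)) => (q.1, q.2.1))).inter
    ((isClosed_fits δ).preimage (by fun_prop : Continuous fun q :
      (ℝ × ℝ) × ((Fin m → ℝ) × (Fin m → ℝ)) => (q.1, q.2.2)))).measurableSet

lemma volume_fitsSet_pairFits (m j : ℕ) {x y : ℝ} (hxy : x ≤ y) (hyx : y - x ≤ δ) :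
    volume (fitsSet δ (pairFits δ m) j x y) = ENNReal.ofReal (pairVol δ m j (y - x)) := by
  have hwin := nonneg_of_spanStep δ (G := windowVol δ) (by simp [windowVol_zero])
    (spanStep_windowVol δ) m
  refine volume_fitsSet δ (measurableSet_pairFits δ m) (G := pairVol δ m)
    (fun n => by unfold pairVol iterQuad; fun_prop)
    (fun s _ => by rw [pairVol_zero]; positivity) (spanStep_iterQuad δ _ _ _)
    (fun x y hxy hyx => ?_) j hxy hyx
  rw [pairFits, Measure.volume_eq_prod, Measure.prod_prod, volume_fits δ m hxy hyx,
    ← ENNReal.ofReal_mul (hwin _ ⟨sub_nonneg.2 hxy, hyx⟩), pairVol_zero, sq]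

lemma mem_Icc_foldMax_foldMin_iff {j : ℕ} {x y z : ℝ} (a : Fin j → ℝ) :
    z ∈ Icc (foldMax y a - δ) (foldMin x a + δ) ↔
      z ∈ Icc (y - δ) (x + δ) ∧ ∀ i, |z - a i| ≤ δ := by
  induction j generalizing x y with
  | zero => simp [foldMin, foldMax]
  | succ n ih =>
    rw [← Fin.cons_self_tail a, foldMin_cons, foldMax_cons, ih, mem_Icc_max_min_iff,
      Fin.forall_fin_succ]
    simp [and_assoc]

/-- The one-dimensional factor of `h_δ(y) · h_δ(y_0, …, y_{r-1}, z)`. -/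
def IsCliquePair (r : ℕ) {n m : ℕ} (y : Fin n → ℝ) (z : Fin m → ℝ) : Prop :=
  (∀ i i', |y i - y i'| ≤ δ) ∧ (∀ (i : Fin n) (t : Fin m), (i : ℕ) < r → |y i - z t| ≤ δ) ∧
    ∀ t t', |z t - z t'| ≤ δ

lemma isCliquePair_cons_zero_append_iff (hδ : 0 ≤ δ) {j m : ℕ} (a : Fin j → ℝ)
    (b v : Fin m → ℝ) :
    IsCliquePair δ (j + 1) (Fin.cons 0 (Fin.append a b) : Fin (j + m + 1) → ℝ) v ↔
      (a, b, v) ∈ fitsSet δ (pairFits δ m) j 0 0 := by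
  simp only [IsCliquePair, fitsSet, pairFits, mem_ofPred_eq, mem_prod, Fits,
    mem_Icc_foldMax_foldMin_iff]
  simp only [Fin.forall_fin_succ, Fin.forall_fin_add, Fin.cons_zero,
    Fin.cons_succ, Fin.append_left, Fin.append_right, Fin.val_zero, Fin.val_succ,
    Fin.val_castAdd, Fin.val_natAdd, add_lt_add_iff_right, Fin.is_lt, Nat.zero_lt_succ,
    add_lt_iff_neg_left, Nat.not_lt_zero, true_implies, false_implies, implies_true,
    mem_Icc, zero_sub, zero_add, sub_zero, abs_neg, ← abs_le, abs_zero, hδ, true_and,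
    and_true, forall_and, forall_comm (α := Fin j) (β := Fin m),
    fun i t => abs_sub_comm (a i) (b t), fun i t => abs_sub_comm (a i) (v t)]
  tauto

lemma isCliquePair_add_const_iff {r n m : ℕ} (y : Fin n → ℝ) (z : Fin m → ℝ) (w : ℝ) :
    IsCliquePair δ r (fun i => y i + w) (fun t => z t + w) ↔ IsCliquePair δ r y z := by
  simp only [IsCliquePair, add_sub_add_right_eq_sub]

lemma isClosed_isCliquePair (r n m : ℕ) :
    IsClosed {p : (Fin n → ℝ) × (Fin m → ℝ) | IsCliquePair δ r p.1 p.2} := by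
  simp only [IsCliquePair, ofPred_and, ofPred_forall]
  refine .inter ?_ (.inter ?_ ?_) <;>
    exact isClosed_iInter fun _ => isClosed_iInter fun _ => by
      first
      | exact isClosed_le (by fun_prop) continuous_const
      | exact isClosed_iInter fun _ => isClosed_le (by fun_prop) continuous_const

/-- `(y, z)` in coordinates centred at `y₀ = w`: `a` holds the other points `y₁, …, y_j` shared with
the clique of `z`, `b` the remaining `m` points of `y`, and `v` the points of `z`. -/
def cliqueChart (j m : ℕ) (q : ℝ × (Fin j → ℝ) × (Fin m → ℝ) × (Fin m → ℝ)) :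
    (Fin (j + m + 1) → ℝ) × (Fin m → ℝ) :=
  (fun i => (Fin.cons 0 (Fin.append q.2.1 q.2.2.1) : Fin (j + m + 1) → ℝ) i + q.1,
    fun t => q.2.2.2 t + q.1)

lemma volume_preserving_cliqueChart (j m : ℕ) : MeasurePreserving (cliqueChart j m) := by
  have h : cliqueChart j m =
      (fun q : ℝ × (Fin (j + m) → ℝ) × (Fin m → ℝ) =>
        ((Fin.cons q.1 q.2.1 : Fin (j + m + 1) → ℝ), q.2.2)) ∘
      (fun q : ℝ × (Fin (j + m) → ℝ) × (Fin m → ℝ) =>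
        (q.1, ((fun i => q.2.1 i + q.1), fun t => q.2.2 t + q.1))) ∘
      Prod.map id (Prod.map (fun p : (Fin j → ℝ) × (Fin m → ℝ) => Fin.append p.1 p.2) id ∘
        MeasurableEquiv.prodAssoc.symm) := by
    funext ⟨w, a, b, v⟩
    refine Prod.ext (funext fun i => Fin.cases ?_ (fun i => ?_) i) rfl <;>
      simp [cliqueChart, MeasurableEquiv.prodAssoc]
  rw [h]
  exact (volume_preserving_finCons_prod _).comp (volume_preserving_add_diag.comp
    ((MeasurePreserving.id volume).prod (((volume_preserving_finAppend j m).prod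
      (MeasurePreserving.id volume)).comp (volume_preserving_prodAssoc.symm _))))

lemma cliqueChart_isCliquePair_iff (hδ : 0 ≤ δ) {j m : ℕ}
    (q : ℝ × (Fin j → ℝ) × (Fin m → ℝ) × (Fin m → ℝ)) :
    IsCliquePair δ (j + 1) (cliqueChart j m q).1 (cliqueChart j m q).2 ↔
      q.2 ∈ fitsSet δ (pairFits δ m) j 0 0 := by
  simp only [cliqueChart]
  rw [isCliquePair_add_const_iff, isCliquePair_cons_zero_append_iff δ hδ]

def cliqueBox (r n m : ℕ) : Set ((Fin n → ℝ) × (Fin m → ℝ)) :=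
  ((univ.pi fun _ => Icc (-(1/2)) (1/2)) ×ˢ (univ.pi fun _ => Icc (-(1/2)) (1/2))) ∩
    {p | IsCliquePair δ r p.1 p.2}

lemma measurableSet_cliqueBox (r n m : ℕ) : MeasurableSet (cliqueBox δ r n m) :=
  ((MeasurableSet.univ_pi fun _ => measurableSet_Icc).prod
    (MeasurableSet.univ_pi fun _ => measurableSet_Icc)).inter
    (isClosed_isCliquePair δ r n m).measurableSet

lemma abs_le_of_isCliquePair {r n m : ℕ} {y : Fin (n + 1) → ℝ} {z : Fin m → ℝ} (hy : y 0 = 0)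
    (h : IsCliquePair δ (r + 1) y z) : (∀ i, |y i| ≤ δ) ∧ ∀ t, |z t| ≤ δ := by
  refine ⟨fun i => ?_, fun t => ?_⟩
  · simpa [hy] using h.1 i 0
  · simpa [hy, abs_sub_comm] using h.2.1 0 t (Nat.succ_pos r)

lemma preimage_cliqueChart_subset (hδ : 0 ≤ δ) (j m : ℕ) :
    cliqueChart j m ⁻¹' cliqueBox δ (j + 1) (j + m + 1) m ⊆
      Icc (-(1/2)) (1/2) ×ˢ fitsSet δ (pairFits δ m) j 0 0 := by
  rintro q ⟨⟨hy, -⟩, hq⟩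
  refine ⟨?_, (cliqueChart_isCliquePair_iff δ hδ q).1 hq⟩
  simpa [cliqueChart] using hy 0 (mem_univ _)

lemma subset_preimage_cliqueChart (hδ : 0 ≤ δ) (j m : ℕ) :
    Icc (-(1/2 - δ)) (1/2 - δ) ×ˢ fitsSet δ (pairFits δ m) j 0 0 ⊆
      cliqueChart j m ⁻¹' cliqueBox δ (j + 1) (j + m + 1) m := by
  rintro ⟨w, a, b, v⟩ ⟨⟨hw₁, hw₂⟩, hq⟩
  have hpair := (cliqueChart_isCliquePair_iff δ hδ _).2 hq
  obtain ⟨hy, hz⟩ := abs_le_of_isCliquePair δ (Fin.cons_zero _ _)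
    ((isCliquePair_cons_zero_append_iff δ hδ a b v).2 hq)
  refine ⟨⟨fun i _ => ?_, fun t _ => ?_⟩, hpair⟩
  · have := abs_le.1 (hy i)
    constructor <;> simp only [cliqueChart] <;> linarith
  · have := abs_le.1 (hz t)
    constructor <;> simp only [cliqueChart] <;> linarith

lemma volume_cliqueBox_le (hδ : 0 ≤ δ) (j m : ℕ) :
    volume (cliqueBox δ (j + 1) (j + m + 1) m) ≤ ENNReal.ofReal (pairVol δ m j 0) := by
  rw [← (volume_preserving_cliqueChart j m).measure_preimage
    (measurableSet_cliqueBox δ _ _ _).nullMeasurableSet]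
  refine (measure_mono (preimage_cliqueChart_subset δ hδ j m)).trans_eq ?_
  rw [Measure.volume_eq_prod, Measure.prod_prod, Real.volume_Icc,
    volume_fitsSet_pairFits δ m j le_rfl (by simpa using hδ), sub_self]
  norm_num

lemma le_volume_cliqueBox (hδ : 0 ≤ δ) (j m : ℕ) :
    ENNReal.ofReal (1 - 2 * δ) * ENNReal.ofReal (pairVol δ m j 0) ≤
      volume (cliqueBox δ (j + 1) (j + m + 1) m) := by
  rw [← (volume_preserving_cliqueChart j m).measure_preimage
    (measurableSet_cliqueBox δ _ _ _).nullMeasurableSet]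
  refine le_of_eq_of_le ?_ (measure_mono (subset_preimage_cliqueChart δ hδ j m))
  rw [Measure.volume_eq_prod, Measure.prod_prod, Real.volume_Icc,
    volume_fitsSet_pairFits δ m j le_rfl (by simpa using hδ), sub_self]
  ring_nf

lemma toReal_volume_cliqueBox_bounds (hδ₀ : 0 ≤ δ) (hδ₁ : δ ≤ 1 / 2) (j m : ℕ) :
    (1 - 2 * δ) * pairVol δ m j 0 ≤ (volume (cliqueBox δ (j + 1) (j + m + 1) m)).toReal ∧
      (volume (cliqueBox δ (j + 1) (j + m + 1) m)).toReal ≤ pairVol δ m j 0 := by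
  have hV₀ : 0 ≤ pairVol δ m j 0 := by rw [pairVol_apply_zero]; positivity
  have h2δ : 0 ≤ 1 - 2 * δ := by linarith
  have hup := volume_cliqueBox_le δ hδ₀ j m
  refine ⟨?_, ENNReal.toReal_le_of_le_ofReal hV₀ hup⟩
  rw [← ENNReal.toReal_ofReal (mul_nonneg h2δ hV₀), ENNReal.ofReal_mul h2δ]
  exact ENNReal.toReal_mono (hup.trans_lt ENNReal.ofReal_lt_top).ne
    (le_volume_cliqueBox δ hδ₀ j m)

lemma closeP_range_and_closeP_iff (hδ : 0 ≤ δ) {d n m : ℕ} (r : ℕ) (y : Fin n → Fin d → ℝ)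
    (z : Fin m → Fin d → ℝ) :
    closeP δ (range y) ∧ closeP δ (y '' {i | (i : ℕ) < r} ∪ range z) ↔
      ∀ c, IsCliquePair δ r (fun i => y i c) (fun t => z t c) := by
  simp only [closeP, IsCliquePair, mem_union, or_imp, forall_and, forall_mem_range,
    forall_mem_image, mem_ofPred_eq, pi_norm_le_iff_of_nonneg hδ, Pi.sub_apply, Real.norm_eq_abs]
  constructor
  · rintro ⟨hyy, -, hyz, hzz⟩
    exact ⟨fun c i i' => hyy i i' c, fun c i t hi => hyz hi t c, fun c t t' => hzz t t' c⟩
  · rintro ⟨hyy, hyz, hzz⟩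
    refine ⟨fun i i' c => hyy c i i', ⟨fun i _ i' _ c => hyy c i i', fun t i hi c => ?_⟩,
      fun i hi t c => hyz c i t hi, fun t t' c => hzz c t t'⟩
    rw [abs_sub_comm]
    exact hyz c i t hi

def transposePair (d n m : ℕ) (g : Fin d → (Fin n → ℝ) × (Fin m → ℝ)) :
    (Fin n → Fin d → ℝ) × (Fin m → Fin d → ℝ) :=
  (fun i c => (g c).1 i, fun t c => (g c).2 t)

lemma volume_preserving_transposePair (d n m : ℕ) : MeasurePreserving (transposePair d n m) :=
  (volume_preserving_swap.prod volume_preserving_swap).comp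
    (volume_measurePreserving_arrowProdEquivProdArrow _ _ _)

lemma integral_eq_volume_cliqueBox_pow (hδ : 0 ≤ δ) (d r n m : ℕ) :
    ∫ p in (univ.pi fun _ : Fin n => univ.pi fun _ : Fin d => Icc (-(1/2) : ℝ) (1/2)) ×ˢ
        (univ.pi fun _ : Fin m => univ.pi fun _ : Fin d => Icc (-(1/2) : ℝ) (1/2)),
      ind (closeP δ (range p.1)) * ind (closeP δ (p.1 '' {i | (i : ℕ) < r} ∪ range p.2)) =
      (volume (cliqueBox δ r n m)).toReal ^ d := by
  set B := (univ.pi fun _ : Fin n => univ.pi fun _ : Fin d => Icc (-(1/2) : ℝ) (1/2)) ×ˢ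
    (univ.pi fun _ : Fin m => univ.pi fun _ : Fin d => Icc (-(1/2) : ℝ) (1/2))
  set S := {p : (Fin n → Fin d → ℝ) × (Fin m → Fin d → ℝ) |
    closeP δ (range p.1) ∧ closeP δ (p.1 '' {i | (i : ℕ) < r} ∪ range p.2)}
  have hS : S = ⋂ c, (fun p => ((fun i => p.1 i c), fun t => p.2 t c)) ⁻¹'
      {p : (Fin n → ℝ) × (Fin m → ℝ) | IsCliquePair δ r p.1 p.2} := by
    ext p
    simp only [S, mem_ofPred_eq, closeP_range_and_closeP_iff δ hδ, mem_iInter, mem_preimage]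
  have hSmeas : MeasurableSet S := by
    rw [hS]
    exact (isClosed_iInter fun c => (isClosed_isCliquePair δ r n m).preimage
      (by fun_prop)).measurableSet
  have hpre : transposePair d n m ⁻¹' (S ∩ B) = univ.pi fun _ => cliqueBox δ r n m := by
    ext g
    simp only [S, B, transposePair, cliqueBox, mem_preimage, mem_inter_iff, mem_ofPred_eq,
      closeP_range_and_closeP_iff δ hδ, mem_prod, mem_univ_pi]
    exact ⟨fun ⟨h, hy, hz⟩ c => ⟨⟨fun i => hy i c, fun t => hz t c⟩, h c⟩,
      fun h => ⟨fun c => (h c).2, fun i c => (h c).1.1 i, fun t c => (h c).1.2 t⟩⟩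
  rw [setIntegral_ind_mul_ind _ _ hSmeas, measureReal_def,
    ← (volume_preserving_transposePair d n m).measure_preimage
      (hSmeas.inter ((MeasurableSet.univ_pi fun _ => MeasurableSet.univ_pi fun _ =>
        measurableSet_Icc).prod (MeasurableSet.univ_pi fun _ => MeasurableSet.univ_pi fun _ =>
        measurableSet_Icc))).nullMeasurableSet,
    hpre, volume_pi_pi, Finset.prod_const, Finset.card_univ, Fintype.card_fin,
    ENNReal.toReal_pow]

end CliquePair

end

open CliquePair

theorem stmt9_general (d k r : ℕ) (hr : 1 ≤ r) (hrk : r ≤ k)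
    (δ : ℝ) (hδ : δ ∈ Set.Ioo (0 : ℝ) (1/4)) :
    (1 - 2 * δ) ^ d * δ ^ (d * (2 * k + 1 - r)) *
        (2 * ((k : ℝ) + 2) * ((k : ℝ) + 1 - (r : ℝ)) / ((r : ℝ) + 1) + (r : ℝ)) ^ d ≤
      (∫ p in ((Set.univ.pi fun _ : Fin (k + 1) =>
                  (Set.univ.pi fun _ : Fin d => Set.Icc (-(1/2) : ℝ) (1/2))) ×ˢ
               (Set.univ.pi fun _ : Fin (k + 1 - r) =>
                  (Set.univ.pi fun _ : Fin d => Set.Icc (-(1/2) : ℝ) (1/2)))),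
        ind (closeP δ (Set.range p.1)) *
        ind (closeP δ ((p.1 '' {i : Fin (k + 1) | (i : ℕ) < r}) ∪ Set.range p.2))) ∧
    (∫ p in ((Set.univ.pi fun _ : Fin (k + 1) =>
                (Set.univ.pi fun _ : Fin d => Set.Icc (-(1/2) : ℝ) (1/2))) ×ˢ
             (Set.univ.pi fun _ : Fin (k + 1 - r) =>
                (Set.univ.pi fun _ : Fin d => Set.Icc (-(1/2) : ℝ) (1/2)))),
      ind (closeP δ (Set.range p.1)) *
      ind (closeP δ ((p.1 '' {i : Fin (k + 1) | (i : ℕ) < r}) ∪ Set.range p.2))) ≤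
      δ ^ (d * (2 * k + 1 - r)) *
        (2 * ((k : ℝ) + 2) * ((k : ℝ) + 1 - (r : ℝ)) / ((r : ℝ) + 1) + (r : ℝ)) ^ d := by
  obtain ⟨hδ₀, hδ₁⟩ := hδ
  obtain ⟨j, rfl⟩ : ∃ j, r = j + 1 := ⟨r - 1, by omega⟩
  obtain ⟨m, rfl⟩ : ∃ m, k = j + m := ⟨k - j, by omega⟩
  rw [show j + m + 1 - (j + 1) = m by omega, integral_eq_volume_cliqueBox_pow δ hδ₀.le]
  have hV : pairVol δ m j 0 = δ ^ (2 * (j + m) + 1 - (j + 1)) *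
      (2 * (((j + m : ℕ) : ℝ) + 2) * (((j + m : ℕ) : ℝ) + 1 - ((j + 1 : ℕ) : ℝ)) /
        (((j + 1 : ℕ) : ℝ) + 1) + ((j + 1 : ℕ) : ℝ)) := by
    rw [pairVol_apply_zero, show 2 * (j + m) + 1 - (j + 1) = 2 * m + j by omega]
    push_cast
    ring_nf
  have hV₀ : 0 ≤ pairVol δ m j 0 := by rw [pairVol_apply_zero]; positivity
  obtain ⟨hlow, hup⟩ := toReal_volume_cliqueBox_bounds δ hδ₀.le (by linarith) j m
  rw [pow_mul', ← mul_pow, ← mul_pow, ← mul_pow, mul_assoc, ← hV]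
  exact ⟨pow_le_pow_left₀ (mul_nonneg (by linarith) hV₀) hlow d,
    pow_le_pow_left₀ ENNReal.toReal_nonneg hup d⟩

/-- For all integers `d ≥ 1`, `k ≥ 1`, `1 ≤ r ≤ k` and every
`δ ∈ (0, 1/4)`, the integral
`I_r := ∫_{W^{2k+2−r}} h_δ(y_0,…,y_k) · h_δ(y_0,…,y_{r−1},z_0,…,z_{k−r}) dy dz`
over `W = [−1/2,1/2]^d ⊂ ℝ^d` satisfies
`(1−2δ)^d · δ^{d(2k+1−r)} · (2(k+2)(k+1−r)/(r+1) + r)^d ≤ I_r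
  ≤ δ^{d(2k+1−r)} · (2(k+2)(k+1−r)/(r+1) + r)^d`. -/
theorem stmt9 (d k r : ℕ) (hd : 1 ≤ d) (hk : 1 ≤ k) (hr : 1 ≤ r) (hrk : r ≤ k)
    (δ : ℝ) (hδ : δ ∈ Set.Ioo (0 : ℝ) (1/4)) :
    (1 - 2 * δ) ^ d * δ ^ (d * (2 * k + 1 - r)) *
        (2 * ((k : ℝ) + 2) * ((k : ℝ) + 1 - (r : ℝ)) / ((r : ℝ) + 1) + (r : ℝ)) ^ d ≤
      (∫ p in ((Set.univ.pi fun _ : Fin (k + 1) =>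
                  (Set.univ.pi fun _ : Fin d => Set.Icc (-(1/2) : ℝ) (1/2))) ×ˢ
               (Set.univ.pi fun _ : Fin (k + 1 - r) =>
                  (Set.univ.pi fun _ : Fin d => Set.Icc (-(1/2) : ℝ) (1/2)))),
        ind (closeP δ (Set.range p.1)) *
        ind (closeP δ ((p.1 '' {i : Fin (k + 1) | (i : ℕ) < r}) ∪ Set.range p.2))) ∧
    (∫ p in ((Set.univ.pi fun _ : Fin (k + 1) =>
                (Set.univ.pi fun _ : Fin d => Set.Icc (-(1/2) : ℝ) (1/2))) ×ˢ
             (Set.univ.pi fun _ : Fin (k + 1 - r) =>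
                (Set.univ.pi fun _ : Fin d => Set.Icc (-(1/2) : ℝ) (1/2)))),
      ind (closeP δ (Set.range p.1)) *
      ind (closeP δ ((p.1 '' {i : Fin (k + 1) | (i : ℕ) < r}) ∪ Set.range p.2))) ≤
      δ ^ (d * (2 * k + 1 - r)) *
        (2 * ((k : ℝ) + 2) * ((k : ℝ) + 1 - (r : ℝ)) / ((r : ℝ) + 1) + (r : ℝ)) ^ d :=
  stmt9_general d k r hr hrk δ hδ
end

section
/- For all integers d ≥ 1, k ≥ 1 and r with 0 ≤ r ≤ k, ∫_{(B)^{2k−r}} h_1(y_0,…,y_{k−1}) · h_1(y_0,…,y_{r−1}, z_0,…,z_{k−r−1}) dy dz ≤ ( (k+1)(k−r+1) )^d, where B := [−1,1]^d ⊂ ℝ^d. -/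
open MeasureTheory

/-!
Dropping `y_0, …, y_{r-1}` from the second indicator only enlarges the integrand, which then
factors: the integral is at most `V_k · V_{k-r}`, where `V_n` is the volume of the set of
`n`-point configurations in `B = [-1,1]^d` of sup-diameter at most `1`. That set is a product over
the `d` coordinates, so `V_n = v_n ^ d` with `v_n` its one-dimensional analogue. Finally
`v_n ≤ n + 1`: a configuration in `[-1,1]` of diameter at most `1` either lies in `[0,1]^n`
(volume `1`), or its lowest point `x_i` lies in `[-1,0]` and all others in `[x_i, x_i + 1]`
(volume `1` for each of the `n` choices of `i`).
-/

open Set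

lemma ind_nonneg (p : Prop) : 0 ≤ ind p := by
  unfold ind; split <;> norm_num

lemma ind_mul_ind (p q : Prop) : ind p * ind q = ind (p ∧ q) := by
  by_cases hp : p <;> by_cases hq : q <;> simp [ind, hp, hq]

lemma ind_le_indicator_one {α : Type*} {p : Prop} {s : Set α} {x : α} (h : p → x ∈ s) :
    ind p ≤ s.indicator 1 x := by
  by_cases hp : p
  · simp [ind, hp, indicator_of_mem (h hp)]
  · simp only [ind, hp, if_false]
    exact indicator_nonneg (fun _ _ => zero_le_one) x

lemma closeP.mono {d : ℕ} {δ : ℝ} {P Q : Set (Fin d → ℝ)} (hPQ : P ⊆ Q) (hQ : closeP δ Q) :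
    closeP δ P :=
  fun a ha b hb => hQ a (hPQ ha) b (hPQ hb)

lemma setIntegral_le_measureReal_of_le_indicator {α : Type*} [MeasurableSpace α]
    {μ : Measure α} {s t : Set α} {f : α → ℝ} (hs : MeasurableSet s) (ht : MeasurableSet t)
    (hμt : μ t ≠ ⊤) (hf₀ : ∀ x ∈ s, 0 ≤ f x) (hf : ∀ x ∈ s, f x ≤ t.indicator 1 x) :
    ∫ x in s, f x ∂μ ≤ μ.real t := by
  have hint : Integrable (t.indicator (1 : α → ℝ)) μ :=
    (integrable_indicator_iff ht).2 (integrableOn_const hμt)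
  calc ∫ x in s, f x ∂μ ≤ ∫ x in s, t.indicator 1 x ∂μ :=
        integral_mono_of_nonneg (ae_restrict_of_forall_mem hs hf₀) hint.integrableOn
          (ae_restrict_of_forall_mem hs hf)
    _ ≤ ∫ x, t.indicator 1 x ∂μ :=
        setIntegral_le_integral hint (ae_of_all _ (indicator_nonneg fun _ _ => zero_le_one))
    _ = μ.real t := integral_indicator_one ht

def unitClusters {E : Type*} [PseudoMetricSpace E] (ι : Type*) (K : Set E) : Set (ι → E) :=
  {x | ∀ i, x i ∈ K ∧ ∀ j, dist (x i) (x j) ≤ 1}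

section UnitClusters

variable {E ι : Type*} [PseudoMetricSpace E]

lemma mem_unitClusters {K : Set E} {x : ι → E} :
    x ∈ unitClusters ι K ↔ ∀ i, x i ∈ K ∧ ∀ j, dist (x i) (x j) ≤ 1 := Iff.rfl

lemma isClosed_unitClusters {K : Set E} (hK : IsClosed K) : IsClosed (unitClusters ι K) := by
  simp only [unitClusters, ofPred_forall, ofPred_and]
  exact isClosed_iInter fun i => (hK.preimage (continuous_apply i)).inter
    (isClosed_iInter fun j => isClosed_le (by fun_prop) continuous_const)

lemma mem_unitClusters_of_closeP {d : ℕ} {K : Set (Fin d → ℝ)} {x : ι → Fin d → ℝ}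
    (hxK : ∀ i, x i ∈ K) (hx : closeP 1 (range x)) : x ∈ unitClusters ι K :=
  fun i => ⟨hxK i, fun j => by simpa [dist_eq_norm] using hx _ ⟨i, rfl⟩ _ ⟨j, rfl⟩⟩

lemma mem_unitClusters_pi_succ_iff {d : ℕ} (K : Set ℝ) (x : ι → Fin (d + 1) → ℝ) :
    x ∈ unitClusters ι (univ.pi fun _ : Fin (d + 1) => K) ↔
      (fun i => x i 0) ∈ unitClusters ι K ∧
        (fun i => Fin.tail (x i)) ∈ unitClusters ι (univ.pi fun _ : Fin d => K) := by
  simp only [mem_unitClusters, mem_univ_pi, dist_pi_le_iff zero_le_one, Fin.forall_fin_succ,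
    forall_and, Fin.tail]
  tauto

end UnitClusters

lemma volume_unitClusters_pi (ι : Type*) [Fintype ι] (K : Set ℝ) (d : ℕ) :
    volume (unitClusters ι (univ.pi fun _ : Fin d => K)) = volume (unitClusters ι K) ^ d := by
  induction d with
  | zero =>
    have : unitClusters ι (univ.pi fun _ : Fin 0 => K) = univ :=
      eq_univ_of_forall fun x i =>
        ⟨fun c _ => c.elim0, fun j => by simp [Subsingleton.elim (x i) (x j)]⟩
    simp [this, volume_pi, Measure.pi_univ]
  | succ d ih =>
    let e : (ι → Fin (d + 1) → ℝ) ≃ᵐ (ι → ℝ) × (ι → Fin d → ℝ) :=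
      (MeasurableEquiv.piCongrRight fun _ => MeasurableEquiv.piFinSuccAbove (fun _ => ℝ) 0).trans
        (MeasurableEquiv.arrowProdEquivProdArrow ℝ (Fin d → ℝ) ι)
    have he : MeasurePreserving e :=
      (volume_measurePreserving_arrowProdEquivProdArrow _ _ _).comp
        (volume_preserving_pi fun _ => volume_preserving_piFinSuccAbove (fun _ => ℝ) 0)
    have hpre : unitClusters ι (univ.pi fun _ : Fin (d + 1) => K) =
        e ⁻¹' (unitClusters ι K ×ˢ unitClusters ι (univ.pi fun _ : Fin d => K)) :=
      ext fun x => mem_unitClusters_pi_succ_iff K x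
    rw [hpre, he.measure_preimage_equiv, Measure.volume_eq_prod, Measure.prod_prod, ih, pow_succ']

def lowerSlab (n : ℕ) (i : Fin n) : Set (Fin n → ℝ) :=
  {x | x i ∈ Icc (-1) 0 ∧ ∀ j, x j ∈ Icc (x i) (x i + 1)}

lemma volume_lowerSlab {n : ℕ} (i : Fin n) : volume (lowerSlab n i) = 1 := by
  cases n with
  | zero => exact i.elim0
  | succ m =>
    -- after splitting off `x i =: s`, the shear `y ↦ y - s` maps the slab onto `[-1,0] × [0,1]^m`
    have hshear : MeasurePreserving (fun q : ℝ × (Fin m → ℝ) => (q.1, q.2 - fun _ => q.1)) :=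
      MeasurePreserving.id volume |>.skew_product (by fun_prop)
        (ae_of_all _ fun s => (measurePreserving_sub_right volume (fun _ => s)).map_eq)
    have hsplit := volume_preserving_piFinSuccAbove (fun _ : Fin (m + 1) => ℝ) i
    have hpre : lowerSlab (m + 1) i =
        MeasurableEquiv.piFinSuccAbove (fun _ => ℝ) i ⁻¹'
          ((fun q : ℝ × (Fin m → ℝ) => (q.1, q.2 - fun _ => q.1)) ⁻¹'
            (Icc (-1) 0 ×ˢ univ.pi fun _ => Icc 0 1)) := by
      ext x
      simp only [lowerSlab, mem_ofPred_eq, mem_preimage, mem_prod, mem_univ_pi, mem_Icc,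
        MeasurableEquiv.piFinSuccAbove_apply, Pi.sub_apply, sub_nonneg, sub_le_iff_le_add',
        Fin.forall_iff_succAbove i, le_refl, true_and, le_add_iff_nonneg_right, zero_le_one,
        forall_and]
      rfl
    rw [hpre, hsplit.measure_preimage_equiv, hshear.measure_preimage
      (measurableSet_Icc.prod (MeasurableSet.univ_pi fun _ => measurableSet_Icc)).nullMeasurableSet,
      Measure.volume_eq_prod, Measure.prod_prod, volume_pi_pi]
    simp

lemma unitClusters_Icc_subset_cube_union_lowerSlab (n : ℕ) :
    unitClusters (Fin n) (Icc (-1 : ℝ) 1) ⊆ (univ.pi fun _ => Icc 0 1) ∪ ⋃ i, lowerSlab n i := by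
  intro x hx
  rcases isEmpty_or_nonempty (Fin n) with hn | hn
  · exact Or.inl fun i => isEmptyElim i
  obtain ⟨i, hi⟩ := Finite.exists_min x
  by_cases h0 : 0 ≤ x i
  · exact Or.inl fun j _ => ⟨h0.trans (hi j), (hx j).1.2⟩
  · refine Or.inr (mem_iUnion.2 ⟨i, ⟨(hx i).1.1, (not_le.1 h0).le⟩, fun j => ⟨hi j, ?_⟩⟩)
    have := (hx j).2 i
    rw [Real.dist_eq, abs_le] at this
    linarith

lemma volume_unitClusters_Icc_le (n : ℕ) :
    volume (unitClusters (Fin n) (Icc (-1 : ℝ) 1)) ≤ n + 1 :=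
  calc volume (unitClusters (Fin n) (Icc (-1 : ℝ) 1))
      ≤ volume (univ.pi fun _ : Fin n => Icc (0 : ℝ) 1) + ∑ i, volume (lowerSlab n i) :=
        (measure_mono (unitClusters_Icc_subset_cube_union_lowerSlab n)).trans
          ((measure_union_le _ _).trans (add_le_add_right (measure_iUnion_fintype_le _ _) _))
    _ = n + 1 := by
      simp only [volume_pi_pi, volume_lowerSlab, Real.volume_Icc]
      simp [add_comm]

lemma volume_unitClusters_box_le (n d : ℕ) :
    volume (unitClusters (Fin n) (univ.pi fun _ : Fin d => Icc (-1 : ℝ) 1)) ≤ (n + 1) ^ d := by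
  rw [volume_unitClusters_pi]
  exact pow_le_pow_left₀ bot_le (volume_unitClusters_Icc_le n) d

lemma volume_unitClusters_box_ne_top (n d : ℕ) :
    volume (unitClusters (Fin n) (univ.pi fun _ : Fin d => Icc (-1 : ℝ) 1)) ≠ ⊤ :=
  ne_top_of_le_ne_top (by simp) (volume_unitClusters_box_le n d)

lemma measureReal_unitClusters_box_le (n d : ℕ) :
    volume.real (unitClusters (Fin n) (univ.pi fun _ : Fin d => Icc (-1 : ℝ) 1)) ≤
      ((n : ℝ) + 1) ^ d := by
  refine ENNReal.toReal_le_of_le_ofReal (by positivity) ((volume_unitClusters_box_le n d).trans ?_)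
  rw [ENNReal.ofReal_pow (by positivity), ENNReal.ofReal_add (by positivity) zero_le_one,
    ENNReal.ofReal_natCast, ENNReal.ofReal_one]

theorem stmt10_general (d k r : ℕ) (hr : r ≤ k) :
    (∫ p in ((Set.univ.pi fun _ : Fin k =>
                (Set.univ.pi fun _ : Fin d => Set.Icc (-1 : ℝ) 1)) ×ˢ
             (Set.univ.pi fun _ : Fin (k - r) =>
                (Set.univ.pi fun _ : Fin d => Set.Icc (-1 : ℝ) 1))),
      ind (closeP 1 (Set.range p.1)) *
      ind (closeP 1 ((p.1 '' {i : Fin k | (i : ℕ) < r}) ∪ Set.range p.2)))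
      ≤ (((k : ℝ) + 1) * ((k : ℝ) - (r : ℝ) + 1)) ^ d := by
  set B := univ.pi fun _ : Fin d => Icc (-1 : ℝ) 1
  set T := unitClusters (Fin k) B ×ˢ unitClusters (Fin (k - r)) B
  have hB : IsClosed B := isClosed_set_pi fun _ _ => isClosed_Icc
  have hT : MeasurableSet T :=
    ((isClosed_unitClusters hB).prod (isClosed_unitClusters hB)).measurableSet
  have hTfin : volume T ≠ ⊤ := by
    rw [Measure.volume_eq_prod, Measure.prod_prod]
    exact ENNReal.mul_ne_top (volume_unitClusters_box_ne_top k d)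
      (volume_unitClusters_box_ne_top (k - r) d)
  calc _ ≤ volume.real T := by
        refine setIntegral_le_measureReal_of_le_indicator
          ((MeasurableSet.univ_pi fun _ => hB.measurableSet).prod
            (MeasurableSet.univ_pi fun _ => hB.measurableSet)) hT hTfin
          (fun p _ => mul_nonneg (ind_nonneg _) (ind_nonneg _)) fun p hp => ?_
        rw [ind_mul_ind]
        refine ind_le_indicator_one fun ⟨hy, hyz⟩ => ⟨?_, ?_⟩
        · exact mem_unitClusters_of_closeP (fun i => hp.1 i (mem_univ i)) hy
        · exact mem_unitClusters_of_closeP (fun i => hp.2 i (mem_univ i))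
            (hyz.mono subset_union_right)
    _ = volume.real (unitClusters (Fin k) B) * volume.real (unitClusters (Fin (k - r)) B) := by
        rw [Measure.volume_eq_prod, measureReal_prod_prod]
    _ ≤ ((k : ℝ) + 1) ^ d * (((k - r : ℕ) : ℝ) + 1) ^ d :=
        mul_le_mul (measureReal_unitClusters_box_le k d) (measureReal_unitClusters_box_le _ d)
          measureReal_nonneg (by positivity)
    _ = _ := by rw [mul_pow, Nat.cast_sub hr]

/-- For all integers `d ≥ 1`, `k ≥ 1` and `0 ≤ r ≤ k`,
`∫_{(B)^{2k−r}} h_1(y_0,…,y_{k−1}) · h_1(y_0,…,y_{r−1},z_0,…,z_{k−r−1}) dy dz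
  ≤ ((k+1)(k−r+1))^d`, where `B = [−1,1]^d ⊂ ℝ^d` with the `ℓ^∞` norm. -/
theorem stmt10 (d k r : ℕ) (hd : 1 ≤ d) (hk : 1 ≤ k) (hr : r ≤ k) :
    (∫ p in ((Set.univ.pi fun _ : Fin k =>
                (Set.univ.pi fun _ : Fin d => Set.Icc (-1 : ℝ) 1)) ×ˢ
             (Set.univ.pi fun _ : Fin (k - r) =>
                (Set.univ.pi fun _ : Fin d => Set.Icc (-1 : ℝ) 1))),
      ind (closeP 1 (Set.range p.1)) *
      ind (closeP 1 ((p.1 '' {i : Fin k | (i : ℕ) < r}) ∪ Set.range p.2)))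
      ≤ (((k : ℝ) + 1) * ((k : ℝ) - (r : ℝ) + 1)) ^ d :=
  stmt10_general d k r hr
end
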